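/- arXiv:2011.02934 — 9 statements merged into one kernel-verified Lean document; each statement's English description precedes it below -/
import Mathlib

section
/- Let D be a domain (a nonempty open connected subset) in ℂ, let (Ω, 𝒜) be a measurable space, and let f : Ω × D → ℂ be such that f(ω,·) is holomorphic on D for each ω ∈ Ω. Define M := { z ∈ D : the function ω ↦ f(ω,z) is measurable }. If M has a limit point in D (i.e., some point of D is an accumulation point of M), then M = D. -/
/-!
Near an accumulation point `c` of `M`, the Taylor coefficients of `f ω` at `c` are measurable
in `ω`: the `n`-th one is the value at `c` of the `n`-th iterated difference quotient
`(swap dslope c)^[n] (f ω)`, which is a limit of its values at points of `M \ {c}`, where it is an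
explicit rational expression in values of `f ω`. Summing the Taylor series shows that a whole disc
around `c` lies in `M`. Hence the set of accumulation points of `M` in `D` is open, and it is
relatively closed, so it is all of `D`.
-/

open Filter Function Set Topology

section Topology

theorem measurable_apply_of_mem_closure {Ω X E : Type*} [MeasurableSpace Ω] [TopologicalSpace X]
    [FrechetUrysohnSpace X] [TopologicalSpace E] [TopologicalSpace.PseudoMetrizableSpace E]
    [MeasurableSpace E] [BorelSpace E] {g : Ω → X → E} {s : Set X} {x : X} (hx : x ∈ closure s)
    (hcont : ∀ ω, ContinuousAt (g ω) x) (hmeas : ∀ y ∈ s, Measurable fun ω => g ω y) :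
    Measurable fun ω => g ω x := by
  obtain ⟨u, hus, hux⟩ := mem_closure_iff_seq_limit.1 hx
  exact measurable_of_tendsto_metrizable (fun n => hmeas _ (hus n))
    (tendsto_pi_nhds.2 fun ω => (hcont ω).tendsto.comp hux)

theorem closure_interior_subset_derivedSet {X : Type*} [TopologicalSpace X] [T1Space X]
    [PerfectSpace X] (s : Set X) : closure (interior s) ⊆ derivedSet s :=
  closure_minimal
    ((preperfect_iff_subset_derivedSet.1 isOpen_interior.preperfect).trans
      (derivedSet_mono _ _ interior_subset))
    (isClosed_derivedSet s)

theorem IsPreconnected.subset_interior_of_accPt {X : Type*} [TopologicalSpace X] [T1Space X]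
    [PerfectSpace X] {D S : Set X} (hD : IsPreconnected D)
    (hS : ∀ z ∈ D, AccPt z (𝓟 S) → S ∈ 𝓝 z) (h : ∃ z ∈ D, AccPt z (𝓟 S)) :
    D ⊆ interior S := by
  obtain ⟨z₀, hz₀D, hz₀⟩ := h
  refine hD.subset_of_closure_inter_subset isOpen_interior
    ⟨z₀, hz₀D, mem_interior_iff_mem_nhds.2 (hS z₀ hz₀D hz₀)⟩ ?_
  rintro z ⟨hz, hzD⟩
  exact mem_interior_iff_mem_nhds.2 (hS z hzD (closure_interior_subset_derivedSet S hz))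

end Topology

section Analytic

variable {Ω 𝕜 : Type*} [MeasurableSpace Ω] [RCLike 𝕜]

theorem AnalyticAt.continuousAt_iterate_dslope {f : 𝕜 → 𝕜} {c : 𝕜} (hf : AnalyticAt 𝕜 f c)
    (n : ℕ) : ContinuousAt ((swap dslope c)^[n] f) c :=
  let ⟨_, hp⟩ := hf
  (hp.has_fpower_series_iterate_dslope_fslope n).continuousAt

theorem measurable_dslope_apply {g : Ω → 𝕜 → 𝕜} {c z : 𝕜} (hz : z ≠ c)
    (hc : Measurable fun ω => g ω c) (hz' : Measurable fun ω => g ω z) :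
    Measurable fun ω => dslope (g ω) c z := by
  simp only [dslope_of_ne _ hz, slope_def_field]
  exact (hz'.sub hc).div_const _

variable {f : Ω → 𝕜 → 𝕜} {s : Set 𝕜} {c : 𝕜}

theorem measurable_iterate_dslope_apply (hc : AccPt c (𝓟 s)) (hf : ∀ ω, AnalyticAt 𝕜 (f ω) c)
    (hmeas : ∀ z ∈ s, Measurable fun ω => f ω z) (n : ℕ) :
    Measurable fun ω => (swap dslope c)^[n] (f ω) c := by
  have hc' : c ∈ closure (s \ {c}) :=
    mem_closure_iff_clusterPt.2 (accPt_principal_iff_clusterPt.1 hc)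
  have hcont : ∀ n ω, ContinuousAt ((swap dslope c)^[n] (f ω)) c := fun n ω =>
    (hf ω).continuousAt_iterate_dslope n
  have hne : ∀ n, ∀ z ∈ s \ {c}, Measurable fun ω => (swap dslope c)^[n] (f ω) z := by
    intro n
    induction n with
    | zero => exact fun z hz => hmeas z hz.1
    | succ n ih =>
      intro z hz
      simp only [iterate_succ_apply']
      exact measurable_dslope_apply hz.2 (measurable_apply_of_mem_closure hc' (hcont n) ih)
        (ih z hz)
  exact measurable_apply_of_mem_closure hc' (hcont n) (hne n)

theorem measurable_coeff_of_hasFPowerSeriesAt {p : Ω → FormalMultilinearSeries 𝕜 𝕜 𝕜}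
    (hp : ∀ ω, HasFPowerSeriesAt (f ω) (p ω) c) (hc : AccPt c (𝓟 s))
    (hmeas : ∀ z ∈ s, Measurable fun ω => f ω z) (n : ℕ) :
    Measurable fun ω => (p ω).coeff n := by
  have hcoeff : ∀ ω, (p ω).coeff n = (swap dslope c)^[n] (f ω) c := fun ω => by
    rw [← ((hp ω).has_fpower_series_iterate_dslope_fslope n).coeff_zero 1,
      ← FormalMultilinearSeries.coeff, FormalMultilinearSeries.coeff_iterate_fslope, zero_add]
  simp only [hcoeff]
  exact measurable_iterate_dslope_apply hc (fun ω => (hp ω).analyticAt) hmeas n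

theorem measurable_apply_of_hasFPowerSeriesOnBall {p : Ω → FormalMultilinearSeries 𝕜 𝕜 𝕜}
    {r : ENNReal} (hp : ∀ ω, HasFPowerSeriesOnBall (f ω) (p ω) c r) (hc : AccPt c (𝓟 s))
    (hmeas : ∀ z ∈ s, Measurable fun ω => f ω z) {z : 𝕜} (hz : z ∈ Metric.eball c r) :
    Measurable fun ω => f ω z := by
  have hcoeff := measurable_coeff_of_hasFPowerSeriesAt (fun ω => (hp ω).hasFPowerSeriesAt) hc hmeas
  refine measurable_of_tendsto_metrizable
    (f := fun n ω => ∑ k ∈ Finset.range n, (z - c) ^ k * (p ω).coeff k)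
    (fun n => Finset.measurable_sum _ fun k _ => (hcoeff k).const_mul _)
    (tendsto_pi_nhds.2 fun ω => ?_)
  simpa only [FormalMultilinearSeries.apply_eq_pow_smul_coeff, smul_eq_mul] using
    ((hp ω).hasSum_sub hz).tendsto_sum_nat

end Analytic

theorem mem_nhds_of_accPt_setOf_measurable {Ω : Type*} [MeasurableSpace Ω] {D : Set ℂ}
    (hD : IsOpen D) {f : Ω → ℂ → ℂ} (hf : ∀ ω, DifferentiableOn ℂ (f ω) D) {c : ℂ} (hcD : c ∈ D)
    (hc : AccPt c (𝓟 {z ∈ D | Measurable fun ω => f ω z})) :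
    {z ∈ D | Measurable fun ω => f ω z} ∈ 𝓝 c := by
  obtain ⟨R, hR, hRD⟩ := Metric.nhds_basis_closedBall.mem_iff.1 (hD.mem_nhds hcD)
  lift R to NNReal using hR.le
  have hp := fun ω => ((hf ω).mono hRD).hasFPowerSeriesOnBall (by exact_mod_cast hR)
  filter_upwards [Metric.ball_mem_nhds c hR, hD.mem_nhds hcD] with z hz hzD
  exact ⟨hzD, measurable_apply_of_hasFPowerSeriesOnBall hp hc (fun _ hw => hw.2)
    (by rwa [Metric.eball_coe])⟩

/-- measurable identity principle, Lemma `domain` of the paper.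
Let `D ⊆ ℂ` be a domain (nonempty open connected set), `(Ω, 𝒜)` a measurable space, and
`f : Ω × D → ℂ` with `f (ω, ·)` holomorphic on `D` for each `ω`. Let
`M := { z ∈ D : ω ↦ f ω z is measurable }`. If `M` has a limit point in `D`, then `M = D`. -/
theorem measurable_identity_principle
    {Ω : Type*} [MeasurableSpace Ω] {D : Set ℂ}
    (hD_open : IsOpen D) (hD_conn : IsConnected D)
    (f : Ω → ℂ → ℂ) (hf : ∀ ω, DifferentiableOn ℂ (f ω) D)
    (M : Set ℂ) (hM : M = {z ∈ D | Measurable fun ω => f ω z})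
    (hlim : ∃ z ∈ D, AccPt z (Filter.principal M)) :
    M = D := by
  subst hM
  refine (sep_subset _ _).antisymm fun z hz => interior_subset ?_
  exact hD_conn.isPreconnected.subset_interior_of_accPt
    (fun _ hwD hw => mem_nhds_of_accPt_setOf_measurable hD_open hf hwD hw) hlim hz
end

section
/- Let K ⊆ ℂ be compact, let U ⊆ ℂ be an open set with K ⊆ U, let (Ω, 𝒜) be a measurable space, and let f : Ω × K → ℂ be such that f(·,z) is measurable for all z ∈ K and, for each ω ∈ Ω, there exists a function g_ω holomorphic on U with g_ω(z) = f(ω,z) for all z ∈ K. Then there exists F : Ω × U → ℂ such that F(·,z) is measurable for all z ∈ U, F(ω,·) is holomorphic on U for all ω ∈ Ω, and F(ω,z) = f(ω,z) for all (ω,z) ∈ Ω × K. -/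
/-!
The extension is built on each connected component `W` of `U` separately. If `K ∩ W` is finite,
Lagrange interpolation does it. Otherwise `K ∩ W` accumulates at some `a ∈ W`, and the chosen
holomorphic extensions `g ω` themselves turn out to be measurable in `ω` at every point of `W`.
Indeed, near a point at which the set of points `z` with `ω ↦ g ω z` measurable accumulates, pick
distinct nodes `v i` in that set: Newton's interpolation series of `g ω` at these nodes converges
to `g ω` (the maximum modulus principle bounds the divided differences geometrically), and its
coefficients are finite combinations of the values `g ω (v i)`. So the set of points near which
`ω ↦ g ω z` is measurable is open, contains `a`, and contains its limit points in `W`; by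
connectedness it is all of `W`.
-/

open Metric Set Filter
open scoped Topology

section IteratedDslope

variable {𝕜 E : Type*} [NontriviallyNormedField 𝕜] [NormedAddCommGroup E] [NormedSpace 𝕜 E]

/-- `iteratedDslope v f n z` is the divided difference `f[v 0, …, v (n - 1), z]`. -/
noncomputable def iteratedDslope (v : ℕ → 𝕜) (f : 𝕜 → E) : ℕ → 𝕜 → E
  | 0 => f
  | n + 1 => dslope (iteratedDslope v f n) (v n)

@[simp]
theorem iteratedDslope_zero (v : ℕ → 𝕜) (f : 𝕜 → E) : iteratedDslope v f 0 = f := rfl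

theorem iteratedDslope_succ (v : ℕ → 𝕜) (f : 𝕜 → E) (n : ℕ) :
    iteratedDslope v f (n + 1) = dslope (iteratedDslope v f n) (v n) := rfl

theorem sum_add_iteratedDslope (v : ℕ → 𝕜) (f : 𝕜 → E) (n : ℕ) (z : 𝕜) :
    ∑ j ∈ Finset.range n, (∏ i ∈ Finset.range j, (z - v i)) • iteratedDslope v f j (v j)
      + (∏ i ∈ Finset.range n, (z - v i)) • iteratedDslope v f n z = f z := by
  induction n with
  | zero => simp
  | succ n ih =>
    rw [Finset.sum_range_succ, Finset.prod_range_succ, mul_smul, iteratedDslope_succ,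
      sub_smul_dslope, smul_sub, ← ih]
    abel

theorem measurable_iteratedDslope_apply [MeasurableSpace E] [BorelSpace E]
    [SecondCountableTopology E] {Ω : Type*} [MeasurableSpace Ω] {v : ℕ → 𝕜}
    (hv : Function.Injective v) {g : Ω → 𝕜 → E} (hg : ∀ i, Measurable fun ω => g ω (v i))
    {j i : ℕ} (hji : j ≤ i) : Measurable fun ω => iteratedDslope v (g ω) j (v i) := by
  induction j generalizing i with
  | zero => exact hg i
  | succ j ih =>
    have hne : v i ≠ v j := hv.ne (by omega)
    simp only [iteratedDslope_succ, dslope_of_ne _ hne, slope_def_module]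
    exact ((ih (by omega)).sub (ih le_rfl)).const_smul _

end IteratedDslope

section Complex

variable {E : Type*} [NormedAddCommGroup E] [NormedSpace ℂ E] [CompleteSpace E]

theorem DiffContOnCl.dslope {f : ℂ → E} {s : Set ℂ} {c : ℂ} (hf : DiffContOnCl ℂ f s)
    (hs : IsOpen s) (hc : c ∈ s) : DiffContOnCl ℂ (dslope f c) s :=
  ⟨(Complex.differentiableOn_dslope (hs.mem_nhds hc)).2 hf.1,
    (continuousOn_dslope (mem_of_superset (hs.mem_nhds hc) subset_closure)).2
      ⟨hf.2, hf.1.differentiableAt (hs.mem_nhds hc)⟩⟩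

theorem DiffContOnCl.iteratedDslope {f : ℂ → E} {s : Set ℂ} {v : ℕ → ℂ}
    (hf : DiffContOnCl ℂ f s) (hs : IsOpen s) (hv : ∀ i, v i ∈ s) (n : ℕ) :
    DiffContOnCl ℂ (iteratedDslope v f n) s := by
  induction n with
  | zero => exact hf
  | succ n ih => exact ih.dslope hs (hv n)

theorem norm_iteratedDslope_le {f : ℂ → E} {v : ℕ → ℂ} {a : ℂ} {r ρ M : ℝ}
    (hv : ∀ i, v i ∈ ball a r) (hrρ : r < ρ) (hf : DiffContOnCl ℂ f (ball a ρ))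
    (hM : ∀ z ∈ closedBall a ρ, ‖f z‖ ≤ M) (n : ℕ) :
    ∀ z ∈ closedBall a ρ, ‖iteratedDslope v f n z‖ ≤ M * (2 / (ρ - r)) ^ n := by
  have hρ : 0 < ρ := (dist_nonneg.trans_lt (hv 0)).trans hrρ
  have hρr : 0 < ρ - r := sub_pos.2 hrρ
  induction n with
  | zero => simpa using hM
  | succ n ih =>
    intro z hz
    rw [← closure_ball a hρ.ne'] at hz
    refine Complex.norm_le_of_forall_mem_frontier_norm_le isBounded_ball
      (hf.iteratedDslope isOpen_ball (fun i => ball_subset_ball hrρ.le (hv i)) (n + 1))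
      (fun x hx => ?_) hz
    rw [frontier_ball a hρ.ne'] at hx
    have hxv : ρ - r ≤ ‖x - v n‖ := by
      have := mem_sphere.1 hx
      have := mem_ball.1 (hv n)
      rw [← dist_eq_norm]
      linarith [dist_triangle x (v n) a]
    have hxv₀ : x ≠ v n := fun h => by simp [h] at hxv; linarith
    rw [iteratedDslope_succ, dslope_of_ne _ hxv₀, slope_def_module, norm_smul, norm_inv]
    calc ‖x - v n‖⁻¹ * ‖iteratedDslope v f n x - iteratedDslope v f n (v n)‖
        ≤ (ρ - r)⁻¹ * (M * (2 / (ρ - r)) ^ n + M * (2 / (ρ - r)) ^ n) := by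
          gcongr
          exact norm_sub_le_of_le (ih x (sphere_subset_closedBall hx))
            (ih (v n) (ball_subset_closedBall (ball_subset_ball hrρ.le (hv n))))
      _ = M * (2 / (ρ - r)) ^ (n + 1) := by ring

theorem tendsto_sum_range_smul_iteratedDslope {f : ℂ → E} {v : ℕ → ℂ} {a z : ℂ} {r ρ : ℝ}
    (hv : ∀ i, v i ∈ ball a r) (hrρ : 5 * r < ρ) (hf : DiffContOnCl ℂ f (ball a ρ))
    (hz : z ∈ ball a r) :
    Tendsto (fun n => ∑ j ∈ Finset.range n,
      (∏ i ∈ Finset.range j, (z - v i)) • iteratedDslope v f j (v j)) atTop (𝓝 (f z)) := by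
  have hr : 0 < r := dist_nonneg.trans_lt hz
  have hρ : 0 < ρ := by linarith
  obtain ⟨M, hM⟩ := (isCompact_closedBall a ρ).exists_bound_of_continuousOn
    (closure_ball a hρ.ne' ▸ hf.continuousOn)
  have hq : 4 * r / (ρ - r) < 1 := by rw [div_lt_one (by linarith)]; linarith
  have hrem : ∀ n, ‖f z - ∑ j ∈ Finset.range n,
      (∏ i ∈ Finset.range j, (z - v i)) • iteratedDslope v f j (v j)‖
        ≤ M * (4 * r / (ρ - r)) ^ n := by
    intro n
    rw [← sum_add_iteratedDslope v f n z, add_sub_cancel_left, norm_smul, norm_prod]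
    calc (∏ i ∈ Finset.range n, ‖z - v i‖) * ‖iteratedDslope v f n z‖
        ≤ (∏ _i ∈ Finset.range n, 2 * r) * (M * (2 / (ρ - r)) ^ n) := by
          gcongr with i
          · rw [← dist_eq_norm, two_mul]
            exact (dist_triangle_right z (v i) a).trans
              (add_lt_add (mem_ball.1 hz) (mem_ball.1 (hv i))).le
          · exact norm_iteratedDslope_le hv (by linarith) hf hM n z
              (ball_subset_closedBall (ball_subset_ball (by linarith) hz))
      _ = M * (4 * r / (ρ - r)) ^ n := by
          rw [Finset.prod_const, Finset.card_range, mul_left_comm, ← mul_pow]; ring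
  rw [tendsto_iff_norm_sub_tendsto_zero]
  refine squeeze_zero (fun _ => norm_nonneg _) (fun n => (norm_sub_rev _ _).trans_le (hrem n)) ?_
  simpa using (tendsto_pow_atTop_nhds_zero_of_lt_one
    (div_nonneg (by linarith) (by linarith)) hq).const_mul M

end Complex

section Measurability

variable {Ω E : Type*} [MeasurableSpace Ω] [NormedAddCommGroup E] [NormedSpace ℂ E]
  [CompleteSpace E] [MeasurableSpace E] [BorelSpace E] [SecondCountableTopology E]
  {g : Ω → ℂ → E}

theorem measurable_apply_of_injective_nodes {v : ℕ → ℂ} {a z : ℂ} {r ρ : ℝ}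
    (hv : Function.Injective v) (hva : ∀ i, v i ∈ ball a r)
    (hvg : ∀ i, Measurable fun ω => g ω (v i)) (hrρ : 5 * r < ρ)
    (hg : ∀ ω, DiffContOnCl ℂ (g ω) (ball a ρ)) (hz : z ∈ ball a r) :
    Measurable fun ω => g ω z :=
  measurable_of_tendsto_metrizable
    (fun _ => Finset.measurable_sum _ fun _ _ =>
      (measurable_iteratedDslope_apply hv hvg le_rfl).const_smul _)
    (tendsto_pi_nhds.2 fun ω => tendsto_sum_range_smul_iteratedDslope hva hrρ (hg ω) hz)

theorem eventually_measurable_apply_of_accPt {W K : Set ℂ} {a : ℂ} (hW : IsOpen W) (ha : a ∈ W)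
    (hg : ∀ ω, DifferentiableOn ℂ (g ω) W) (hK : ∀ z ∈ K, Measurable fun ω => g ω z)
    (hacc : AccPt a (𝓟 K)) : ∀ᶠ z in 𝓝 a, Measurable fun ω => g ω z := by
  obtain ⟨R, hR, haR⟩ := isOpen_iff.1 hW a ha
  have hacc' : AccPt a (𝓟 (K ∩ ball a (R / 12))) :=
    accPt_iff_frequently.2 <| ((accPt_iff_frequently.1 hacc).and_eventually
      (ball_mem_nhds a (by positivity))).mono fun _ ⟨⟨hne, hyK⟩, hyB⟩ => ⟨hne, hyK, hyB⟩
  let u := (Set.Infinite.of_accPt hacc').natEmbedding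
  filter_upwards [ball_mem_nhds a (by positivity : 0 < R / 12)] with z hz
  refine measurable_apply_of_injective_nodes (v := fun n => u n)
    (Subtype.val_injective.comp u.injective) (fun n => (u n).2.2) (fun n => hK _ (u n).2.1)
    (by linarith : 5 * (R / 12) < R / 2) (fun ω => ?_) hz
  exact (hg ω).diffContOnCl_ball ((closedBall_subset_ball (by linarith)).trans haR)

theorem measurable_apply_of_isPreconnected {W K : Set ℂ} {a : ℂ} (hW : IsOpen W)
    (hWc : IsPreconnected W) (ha : a ∈ W) (hg : ∀ ω, DifferentiableOn ℂ (g ω) W)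
    (hK : ∀ z ∈ K, Measurable fun ω => g ω z) (hacc : AccPt a (𝓟 K)) :
    ∀ z ∈ W, Measurable fun ω => g ω z := by
  let u := {z | ∀ᶠ y in 𝓝 z, Measurable fun ω => g ω y}
  suffices W ⊆ u from fun z hz => (this hz).self_of_nhds
  refine hWc.subset_of_closure_inter_subset isOpen_setOfPred_eventually_nhds
    ⟨a, ha, eventually_measurable_apply_of_accPt hW ha hg hK hacc⟩ ?_
  rintro z ⟨hzu, hzW⟩
  rcases clusterPt_principal.1 (mem_closure_iff_clusterPt.1 hzu) with hz | hz
  · exact hz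
  · exact eventually_measurable_apply_of_accPt hW hzW hg (fun y hy => hy.self_of_nhds) hz

end Measurability

theorem exists_measurable_lagrange_interpolation {Ω : Type*} [MeasurableSpace Ω] {K : Set ℂ}
    (hK : K.Finite) (f : Ω → ℂ → ℂ) (hf : ∀ z ∈ K, Measurable fun ω => f ω z) :
    ∃ F : Ω → ℂ → ℂ, (∀ z, Measurable fun ω => F ω z) ∧ (∀ ω, Differentiable ℂ (F ω)) ∧
      ∀ ω, ∀ z ∈ K, F ω z = f ω z := by
  refine ⟨fun ω z => (Lagrange.interpolate hK.toFinset id (f ω)).eval z, fun z => ?_,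
    fun ω => Polynomial.differentiable _, fun ω z hz => ?_⟩
  · simp only [Lagrange.interpolate_apply, Polynomial.eval_finsetSum, Polynomial.eval_mul,
      Polynomial.eval_C]
    exact Finset.measurable_sum _ fun i hi => (hf i (hK.mem_toFinset.1 hi)).mul_const _
  · exact Lagrange.eval_interpolate_at_node _ (injOn_id _) (hK.mem_toFinset.2 hz)

theorem exists_measurable_extension_of_isPreconnected {Ω : Type*} [MeasurableSpace Ω]
    {K W : Set ℂ} (hK : IsCompact K) (hW : IsOpen W) (hWc : IsPreconnected W) (hKW : K ⊆ W)
    (f : Ω → ℂ → ℂ) (hf_meas : ∀ z ∈ K, Measurable fun ω => f ω z)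
    (hf_ext : ∀ ω, ∃ g : ℂ → ℂ, DifferentiableOn ℂ g W ∧ ∀ z ∈ K, g z = f ω z) :
    ∃ F : Ω → ℂ → ℂ, (∀ z ∈ W, Measurable fun ω => F ω z) ∧
      (∀ ω, DifferentiableOn ℂ (F ω) W) ∧ ∀ ω, ∀ z ∈ K, F ω z = f ω z := by
  rcases K.finite_or_infinite with hfin | hinf
  · obtain ⟨F, hFm, hFd, hFK⟩ := exists_measurable_lagrange_interpolation hfin f hf_meas
    exact ⟨F, fun z _ => hFm z, fun ω => (hFd ω).differentiableOn, hFK⟩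
  · choose g hg hgK using hf_ext
    obtain ⟨a, haK, hacc⟩ := hinf.exists_accPt_of_subset_isCompact hK subset_rfl
    refine ⟨g, measurable_apply_of_isPreconnected hW hWc (hKW haK) hg (fun z hz => ?_) hacc,
      hg, hgK⟩
    convert hf_meas z hz using 2 with ω
    exact hgK ω z hz

theorem closure_connectedComponentIn_inter_subset {X : Type*} [TopologicalSpace X]
    (F : Set X) (x : X) : closure (connectedComponentIn F x) ∩ F ⊆ connectedComponentIn F x := by
  rintro y ⟨hyC, hyF⟩
  rcases (connectedComponentIn F x).eq_empty_or_nonempty with hC | hC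
  · simp [hC] at hyC
  have hx : x ∈ F := connectedComponentIn_nonempty_iff.1 hC
  have hpre : IsPreconnected (insert y (connectedComponentIn F x)) :=
    isPreconnected_connectedComponentIn.subset_closure (subset_insert _ _)
      (insert_subset hyC subset_closure)
  exact hpre.subset_connectedComponentIn (mem_insert_of_mem _ (mem_connectedComponentIn hx))
    (insert_subset hyF (connectedComponentIn_subset _ _)) (mem_insert _ _)

theorem IsCompact.inter_connectedComponentIn {X : Type*} [TopologicalSpace X] {K F : Set X}
    (hK : IsCompact K) (hKF : K ⊆ F) (x : X) : IsCompact (K ∩ connectedComponentIn F x) := by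
  convert hK.inter_right (isClosed_closure (s := connectedComponentIn F x)) using 1
  exact Subset.antisymm (inter_subset_inter_right _ subset_closure) fun y ⟨hyK, hyC⟩ =>
    ⟨hyK, closure_connectedComponentIn_inter_subset F x ⟨hyC, hKF hyK⟩⟩

theorem differentiableOn_of_connectedComponentIn {𝕜 E F : Type*} [NontriviallyNormedField 𝕜]
    [NormedAddCommGroup E] [NormedSpace 𝕜 E] [LocallyConnectedSpace E] [NormedAddCommGroup F]
    [NormedSpace 𝕜 F] {U : Set E} (hU : IsOpen U) {Φ : Set E → E → F}
    (hΦ : ∀ z ∈ U, DifferentiableOn 𝕜 (Φ (connectedComponentIn U z)) (connectedComponentIn U z)) :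
    DifferentiableOn 𝕜 (fun z => Φ (connectedComponentIn U z) z) U := by
  intro z hz
  have hC : connectedComponentIn U z ∈ 𝓝 z :=
    hU.connectedComponentIn.mem_nhds (mem_connectedComponentIn hz)
  refine (((hΦ z hz).differentiableAt hC).congr_of_eventuallyEq ?_).differentiableWithinAt
  filter_upwards [hC] with y hy
  rw [← connectedComponentIn_eq hy]

/-- Lemma `U` of the paper. Let `K ⊆ ℂ` be compact, `U ⊇ K` open,
`(Ω, 𝒜)` a measurable space, and `f : Ω × K → ℂ` with `f (·, z)` measurable for all
`z ∈ K` and such that for each `ω` there is a function `g_ω` holomorphic on `U` with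
`g_ω = f (ω, ·)` on `K`. Then there is `F : Ω × U → ℂ` with `F (·, z)` measurable for all
`z ∈ U`, `F (ω, ·)` holomorphic on `U` for all `ω`, and `F = f` on `Ω × K`. -/
theorem measurable_extension_to_open
    {Ω : Type*} [MeasurableSpace Ω] {K U : Set ℂ}
    (hK : IsCompact K) (hU : IsOpen U) (hKU : K ⊆ U)
    (f : Ω → ℂ → ℂ)
    (hf_meas : ∀ z ∈ K, Measurable fun ω => f ω z)
    (hf_ext : ∀ ω : Ω, ∃ g : ℂ → ℂ, DifferentiableOn ℂ g U ∧ ∀ z ∈ K, g z = f ω z) :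
    ∃ F : Ω → ℂ → ℂ,
      (∀ z ∈ U, Measurable fun ω => F ω z) ∧
      (∀ ω : Ω, DifferentiableOn ℂ (F ω) U) ∧
      (∀ ω : Ω, ∀ z ∈ K, F ω z = f ω z) := by
  -- Choosing per component, not per point, makes the glued `F ω` equal to one `Φ W ω` near `z`.
  have hcomp : ∀ W, (∃ z ∈ U, connectedComponentIn U z = W) → ∃ F : Ω → ℂ → ℂ,
      (∀ z ∈ W, Measurable fun ω => F ω z) ∧ (∀ ω, DifferentiableOn ℂ (F ω) W) ∧
        ∀ ω, ∀ z ∈ K ∩ W, F ω z = f ω z := by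
    rintro _ ⟨z₀, -, rfl⟩
    refine exists_measurable_extension_of_isPreconnected (hK.inter_connectedComponentIn hKU z₀)
      hU.connectedComponentIn isPreconnected_connectedComponentIn inter_subset_right f
      (fun z hz => hf_meas z hz.1) fun ω => ?_
    obtain ⟨g, hg, hgK⟩ := hf_ext ω
    exact ⟨g, hg.mono (connectedComponentIn_subset U z₀), fun z hz => hgK z hz.1⟩
  choose! Φ hΦ using hcomp
  have hΦU : ∀ z ∈ U, _ := fun z hz => hΦ (connectedComponentIn U z) ⟨z, hz, rfl⟩
  refine ⟨fun ω z => Φ (connectedComponentIn U z) ω z,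
    fun z hz => (hΦU z hz).1 z (mem_connectedComponentIn hz),
    fun ω => differentiableOn_of_connectedComponentIn (Φ := fun W => Φ W ω) hU fun z hz =>
      (hΦU z hz).2.1 ω,
    fun ω z hz => (hΦU z (hKU hz)).2.2 ω z ⟨hz, mem_connectedComponentIn (hKU hz)⟩⟩
end

section
/- Let (Ω, 𝒜) be a measurable space, let X be a compact metric space, and let g : Ω × X → ℂⁿ be such that g(ω,·) is continuous on X for each ω ∈ Ω and g(·,x) is measurable for each x ∈ X. Then the map ω ↦ g(ω, X) (the image of X under g(ω,·), which is a nonempty compact subset of ℂⁿ) is a measurable map from Ω to 𝒦′(ℂⁿ); that is, it is a random compact set in ℂⁿ. -/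
/-!
For a fixed compact `K`, the Hausdorff distance from `range (g ω)` to `K` only sees `g ω` on a
countable dense subset of `X` and only a countable dense subset of `K`, so it is a countable
supremum of countable infima of measurable functions of `ω`. In a second-countable space every
open set is a countable union of balls, so measurability of all these distances gives
measurability of `ω ↦ range (g ω)`.
-/

open Set Metric MeasureTheory TopologicalSpace
open scoped ENNReal

theorem measurable_of_measurable_edist {Ω S : Type*} [MeasurableSpace Ω] [PseudoEMetricSpace S]
    [SecondCountableTopology S] [MeasurableSpace S] [BorelSpace S] {f : Ω → S}
    (h : ∀ y, Measurable fun ω => edist (f ω) y) : Measurable f := by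
  refine measurable_of_isOpen fun U hU => ?_
  obtain ⟨T, hTc, hTU⟩ := isOpen_iUnion_countable
    (fun p : {p : S × ℝ≥0∞ // eball p.1 p.2 ⊆ U} => eball p.1.1 p.1.2) fun _ => isOpen_eball
  have hU_eq : U = ⋃ p ∈ T, eball p.1.1 p.1.2 := by
    refine hTU ▸ subset_antisymm (fun x hx => ?_) (iUnion_subset fun p => p.2)
    obtain ⟨ε, hε, hsub⟩ := EMetric.isOpen_iff.1 hU x hx
    exact mem_iUnion.2 ⟨⟨(x, ε), hsub⟩, mem_eball_self hε⟩
  rw [hU_eq, preimage_iUnion₂]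
  exact .biUnion hTc fun p _ => measurableSet_lt (h p.1.1) measurable_const

theorem Continuous.hausdorffEDist_image_of_dense {X Y : Type*} [TopologicalSpace X]
    [PseudoEMetricSpace Y] {f : X → Y} (hf : Continuous f) {T : Set X} (hT : Dense T)
    (K : Set Y) : hausdorffEDist (f '' T) K = hausdorffEDist (range f) K := by
  rw [← hausdorffEDist_closure_left, ← hausdorffEDist_closure_left (s := range f)]
  exact congrArg (hausdorffEDist · K) <| subset_antisymm (closure_mono (image_subset_range f T))
    (closure_minimal (hf.range_subset_closure_image_dense hT) isClosed_closure)

theorem measurable_hausdorffEDist_image_of_countable {Ω X Y : Type*} [MeasurableSpace Ω]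
    [PseudoEMetricSpace Y] [MeasurableSpace Y] [OpensMeasurableSpace Y] {g : Ω → X → Y}
    (hg : ∀ x, Measurable fun ω => g ω x) {T : Set X} (hT : T.Countable) {D : Set Y}
    (hD : D.Countable) : Measurable fun ω => hausdorffEDist (g ω '' T) D := by
  simp only [hausdorffEDist_def, infEDist, iSup_image, iInf_image]
  exact .sup (.biSup T hT fun x _ => (hg x).infEDist)
    (.biSup D hD fun y _ => .biInf T hT fun x _ => measurable_edist_right.comp (hg x))

theorem measurable_hausdorffEDist_range {Ω X Y : Type*} [MeasurableSpace Ω] [TopologicalSpace X]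
    [SeparableSpace X] [PseudoEMetricSpace Y] [MeasurableSpace Y] [OpensMeasurableSpace Y]
    {g : Ω → X → Y} (hg_cont : ∀ ω, Continuous (g ω)) (hg_meas : ∀ x, Measurable fun ω => g ω x)
    {K : Set Y} (hK : IsSeparable K) : Measurable fun ω => hausdorffEDist (range (g ω)) K := by
  obtain ⟨T, hTc, hTd⟩ := exists_countable_dense X
  obtain ⟨D, hDK, hDc, hKD⟩ := hK.exists_countable_dense_subset
  have hclosure : closure D = closure K :=
    subset_antisymm (closure_mono hDK) (closure_minimal hKD isClosed_closure)
  simp_rw [← hausdorffEDist_closure_right (t := K), ← hclosure, hausdorffEDist_closure_right,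
    ← (hg_cont _).hausdorffEDist_image_of_dense hTd]
  exact measurable_hausdorffEDist_image_of_countable hg_meas hTc hDc

/-- Theorem `F sub f` of the paper. Let `(Ω, 𝒜)` be a measurable space,
`X` a (nonempty) compact metric space and `g : Ω × X → ℂⁿ` a random continuous function.
Then the map sending `ω` to the image `g (ω, X)`, a nonempty compact subset of `ℂⁿ`, is a
measurable map from `Ω` to the space `𝒦′(ℂⁿ)` of nonempty compact subsets of `ℂⁿ` with the
Hausdorff distance and its Borel σ-algebra; i.e. it is a random compact set in `ℂⁿ`. -/
theorem image_random_compact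
    {Ω : Type*} [MeasurableSpace Ω]
    {X : Type*} [MetricSpace X] [CompactSpace X] [Nonempty X] {n : ℕ}
    [MeasurableSpace (NonemptyCompacts (Fin n → ℂ))]
    [BorelSpace (NonemptyCompacts (Fin n → ℂ))]
    (g : Ω → X → (Fin n → ℂ))
    (hg_cont : ∀ ω, Continuous (g ω))
    (hg_meas : ∀ x, Measurable fun ω => g ω x) :
    Measurable (fun ω => (⟨⟨Set.range (g ω), isCompact_range (hg_cont ω)⟩,
      Set.range_nonempty _⟩ : NonemptyCompacts (Fin n → ℂ))) :=
  measurable_of_measurable_edist fun K =>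
    measurable_hausdorffEDist_range hg_cont hg_meas K.isCompact.isSeparable
end

section
/- Let (Ω, 𝒜) be a measurable space and let K : Ω → 𝒦′(ℂⁿ) be a random compact set. Then the polynomially convex hull of K is a random compact set: there exists a measurable map H : Ω → 𝒦′(ℂⁿ) such that for every ω ∈ Ω the set H(ω) equals the polynomially convex hull K̂(ω) of K(ω). -/
/-!
The polynomials with coefficients in `ℚ(i)` form a countable family `q₀, q₁, …` that
approximates every polynomial uniformly on bounded sets, so `K̂` is already cut out by the
conditions `‖q_j z‖ ≤ ‖q_j‖_K`. Keeping only the coordinate functions and `q₀, …, q_{k-1}`,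
and rounding each bound `‖q‖_K` up to the grid `2⁻ᵏℤ`, gives compact sets `A_k(K) ⊇ K̂`; since
the dyadic grids refine each other, `A_k(K)` decreases to `K̂`, hence converges to it in the
Hausdorff metric. Each `A_k(K)` depends on `K` only through finitely many integers
`⌈2ᵏ ‖q‖_K⌉`, which are measurable in `K` because `K ↦ ‖q‖_K` is continuous. So `K ↦ A_k(K)`
is measurable, and so is its pointwise limit `K ↦ K̂`.
-/

open TopologicalSpace MvPolynomial Metric Set Filter Topology

instance MvPolynomial.instCountable {σ R : Type*} [CommSemiring R] [Countable σ] [Countable R] :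
    Countable (MvPolynomial σ R) :=
  AddMonoidAlgebra.coeff_injective.countable

theorem Measurable.of_factorsThrough_countable {α β γ : Type*} [MeasurableSpace α]
    [MeasurableSpace β] [MeasurableSpace γ] [Countable γ] [MeasurableSingletonClass γ]
    {f : α → β} {c : α → γ} (hc : Measurable c) (hf : f.FactorsThrough c) : Measurable f := by
  intro s _
  have hs : f ⁻¹' s = c ⁻¹' (c '' (f ⁻¹' s)) := by
    refine (subset_preimage_image c _).antisymm ?_
    rintro a ⟨b, hb, hba⟩
    rwa [mem_preimage, ← hf hba]
  rw [hs]
  exact hc (to_countable _).measurableSet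

namespace TopologicalSpace.NonemptyCompacts

variable {X : Type*} [TopologicalSpace X] {f : X → ℝ}

theorem le_ciSup_of_mem (hf : Continuous f) (L : NonemptyCompacts X) {x : X} (hx : x ∈ L) :
    f x ≤ ⨆ y : (L : Set X), f y := by
  have hbdd := L.isCompact.bddAbove_image hf.continuousOn
  rw [image_eq_range] at hbdd
  exact le_ciSup hbdd ⟨x, hx⟩

theorem ciSup_le_of_forall_mem (L : NonemptyCompacts X) {c : ℝ} (h : ∀ x ∈ L, f x ≤ c) :
    ⨆ y : (L : Set X), f y ≤ c :=
  have : Nonempty (L : Set X) := L.nonempty.to_subtype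
  ciSup_le fun x => h x x.2

end TopologicalSpace.NonemptyCompacts

namespace Metric.NonemptyCompacts

variable {X : Type*} [MetricSpace X]

theorem tendsto_of_antitone {A : ℕ → NonemptyCompacts X}
    (hA : Antitone fun k => (A k : Set X)) {S : NonemptyCompacts X}
    (hS : (S : Set X) = ⋂ k, (A k : Set X)) : Tendsto A atTop (𝓝 S) := by
  rw [Metric.tendsto_atTop]
  intro ε hε
  obtain ⟨N, hN⟩ : ∃ N, (A N : Set X) ⊆ thickening (ε / 2) S :=
    exists_subset_nhds_of_isCompact hA.directed_ge (fun k => (A k).isCompact) fun x hx =>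
      isOpen_thickening.mem_nhds (self_subset_thickening (half_pos hε) _ (hS ▸ hx))
  refine ⟨N, fun k hk => (hausdorffDist_le_of_mem_dist (half_pos hε).le ?_ ?_).trans_lt
    (half_lt_self hε)⟩
  · intro x hx
    obtain ⟨y, hy, hxy⟩ := mem_thickening_iff.1 (hN (hA hk hx))
    exact ⟨y, hy, hxy.le⟩
  · intro y hy
    refine ⟨y, mem_iInter.1 (hS ▸ hy) k, ?_⟩
    rw [dist_self]
    exact (half_pos hε).le

theorem continuous_ciSup {f : X → ℝ} (hf : Continuous f) :
    Continuous fun L : NonemptyCompacts X => ⨆ x : (L : Set X), f x := by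
  rw [Metric.continuous_iff]
  intro L₀ ε hε
  obtain ⟨δ, hδ, hfδ⟩ : ∃ δ > 0, ∀ x ∈ L₀, ∀ y, dist x y < δ → dist (f x) (f y) < ε / 2 := by
    obtain ⟨δ, hδ, h⟩ := Metric.mem_uniformity_dist.1 <|
      L₀.isCompact.uniformContinuousAt_of_continuousAt f (fun _ _ => hf.continuousAt)
        (Metric.dist_mem_uniformity (half_pos hε))
    exact ⟨δ, hδ, fun x hx y hxy => h hxy hx⟩
  refine ⟨δ, hδ, fun L hL => ?_⟩
  rw [dist_eq] at hL
  have hfin := edist_ne_top L L₀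
  have hup : ⨆ y : (L : Set X), f y ≤ (⨆ x : (L₀ : Set X), f x) + ε / 2 := by
    refine NonemptyCompacts.ciSup_le_of_forall_mem L fun y hy => ?_
    obtain ⟨x, hx, hyx⟩ := exists_dist_lt_of_hausdorffDist_lt hy hL hfin
    have := (abs_lt.1 (hfδ x hx y (dist_comm y x ▸ hyx))).1
    linarith [NonemptyCompacts.le_ciSup_of_mem hf L₀ hx]
  have hdown : ⨆ x : (L₀ : Set X), f x ≤ (⨆ y : (L : Set X), f y) + ε / 2 := by
    refine NonemptyCompacts.ciSup_le_of_forall_mem L₀ fun x hx => ?_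
    obtain ⟨y, hy, hyx⟩ := exists_dist_lt_of_hausdorffDist_lt' hx hL hfin
    have := (abs_lt.1 (hfδ x hx y (dist_comm y x ▸ hyx))).2
    linarith [NonemptyCompacts.le_ciSup_of_mem hf L hy]
  rw [Real.dist_eq, abs_sub_lt_iff]
  constructor <;> linarith

end Metric.NonemptyCompacts

noncomputable def dyadicCeil (k : ℕ) (t : ℝ) : ℝ := ⌈t * 2 ^ k⌉ / 2 ^ k

theorem le_dyadicCeil (k : ℕ) (t : ℝ) : t ≤ dyadicCeil k t :=
  (le_div_iff₀ (by positivity)).2 (Int.le_ceil _)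

theorem dyadicCeil_le (k : ℕ) (t : ℝ) : dyadicCeil k t ≤ t + (1 / 2) ^ k := by
  rw [dyadicCeil, div_le_iff₀ (by positivity), add_mul, one_div_pow,
    one_div_mul_cancel (by positivity)]
  exact (Int.ceil_lt_add_one _).le

theorem antitone_dyadicCeil (t : ℝ) : Antitone fun k => dyadicCeil k t := by
  refine antitone_nat_of_succ_le fun k => ?_
  rw [dyadicCeil, dyadicCeil, div_le_div_iff₀ (by positivity) (by positivity), pow_succ]
  have : (⌈t * (2 ^ k * 2)⌉ : ℝ) ≤ ⌈t * 2 ^ k⌉ * 2 := by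
    exact_mod_cast Int.ceil_le.2 (by push_cast; nlinarith [Int.le_ceil (t * 2 ^ k)])
  nlinarith [pow_pos (two_pos (α := ℝ)) k]

theorem tendsto_dyadicCeil (t : ℝ) : Tendsto (fun k => dyadicCeil k t) atTop (𝓝 t) := by
  refine tendsto_of_tendsto_of_tendsto_of_le_of_le tendsto_const_nhds ?_ (le_dyadicCeil · t)
    (dyadicCeil_le · t)
  simpa using tendsto_const_nhds.add (tendsto_pow_atTop_nhds_zero_of_lt_one
    (by norm_num : (0 : ℝ) ≤ 1 / 2) (by norm_num))

namespace PolynomialHull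

variable {ι : Type*}

variable (ι) in
/-- Sends the extra variable `none` to `I`, so the range is the polynomials with coefficients
in `ℚ(i)`. -/
noncomputable def gaussianRatPoly : MvPolynomial (Option ι) ℚ →ₐ[ℚ] MvPolynomial ι ℂ :=
  aeval fun o => o.elim (C Complex.I) X

theorem exists_gaussianRat_near (c : ℂ) {ε : ℝ} (hε : 0 < ε) :
    ∃ a b : ℚ, ‖c - (a + b * Complex.I)‖ < ε := by
  obtain ⟨a, ha⟩ := exists_rat_near c.re (half_pos hε)
  obtain ⟨b, hb⟩ := exists_rat_near c.im (half_pos hε)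
  refine ⟨a, b, (Complex.norm_le_abs_re_add_abs_im _).trans_lt ?_⟩
  simp only [Complex.sub_re, Complex.add_re, Complex.ratCast_re, Complex.mul_re, Complex.I_re,
    mul_zero, Complex.ratCast_im, Complex.I_im, mul_one, sub_self, add_zero, Complex.sub_im,
    Complex.add_im, Complex.mul_im, zero_add]
  linarith

theorem exists_gaussianRatPoly_near [Fintype ι] (p : MvPolynomial ι ℂ) {K : Set (ι → ℂ)}
    (hK : Bornology.IsBounded K) {ε : ℝ} (hε : 0 < ε) :
    ∃ q, ∀ w ∈ K, ‖eval w p - eval w (gaussianRatPoly ι q)‖ < ε := by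
  induction p using MvPolynomial.induction_on generalizing ε with
  | C c =>
    obtain ⟨a, b, hab⟩ := exists_gaussianRat_near c hε
    refine ⟨C a + C b * X none, fun w _ => ?_⟩
    simpa [gaussianRatPoly] using hab
  | add p₁ p₂ h₁ h₂ =>
    obtain ⟨q₁, hq₁⟩ := h₁ (half_pos hε)
    obtain ⟨q₂, hq₂⟩ := h₂ (half_pos hε)
    refine ⟨q₁ + q₂, fun w hw => ?_⟩
    calc ‖eval w (p₁ + p₂) - eval w (gaussianRatPoly ι (q₁ + q₂))‖
        = ‖(eval w p₁ - eval w (gaussianRatPoly ι q₁)) +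
            (eval w p₂ - eval w (gaussianRatPoly ι q₂))‖ := by
          simp only [map_add]; ring_nf
      _ < ε / 2 + ε / 2 := (norm_add_le _ _).trans_lt (add_lt_add (hq₁ w hw) (hq₂ w hw))
      _ = ε := add_halves ε
  | mul_X p i h =>
    obtain ⟨B, hB⟩ := hK.exists_norm_le
    obtain ⟨q, hq⟩ := h (ε := ε / (max B 0 + 1)) (by positivity)
    refine ⟨q * X (some i), fun w hw => ?_⟩
    have hwi : ‖w i‖ ≤ max B 0 :=
      (norm_le_pi_norm w i).trans ((hB w hw).trans (le_max_left _ _))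
    calc ‖eval w (p * X i) - eval w (gaussianRatPoly ι (q * X (some i)))‖
        = ‖eval w p - eval w (gaussianRatPoly ι q)‖ * ‖w i‖ := by
          simp [gaussianRatPoly, ← sub_mul]
      _ ≤ ε / (max B 0 + 1) * max B 0 := by gcongr; exact (hq w hw).le
      _ < ε := by
          rw [div_mul_eq_mul_div, div_lt_iff₀ (by positivity)]
          nlinarith

noncomputable def supNormOn (L : Set (ι → ℂ)) (p : MvPolynomial ι ℂ) : ℝ :=
  ⨆ x : L, ‖eval (x : ι → ℂ) p‖

def polyHull (L : Set (ι → ℂ)) : Set (ι → ℂ) :=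
  {z | ∀ p : MvPolynomial ι ℂ, ‖eval z p‖ ≤ supNormOn L p}

def polySublevel (S : Set (MvPolynomial ι ℂ)) (c : MvPolynomial ι ℂ → ℝ) : Set (ι → ℂ) :=
  {z | ∀ p ∈ S, ‖eval z p‖ ≤ c p}

section SupNorm

variable (L : NonemptyCompacts (ι → ℂ)) (p : MvPolynomial ι ℂ)

theorem norm_eval_le_supNormOn {x : ι → ℂ} (hx : x ∈ L) : ‖eval x p‖ ≤ supNormOn L p :=
  NonemptyCompacts.le_ciSup_of_mem (continuous_eval p).norm L hx

theorem supNormOn_le {c : ℝ} (h : ∀ x ∈ L, ‖eval x p‖ ≤ c) : supNormOn L p ≤ c :=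
  NonemptyCompacts.ciSup_le_of_forall_mem L h

theorem continuous_supNormOn [Fintype ι] :
    Continuous fun L : NonemptyCompacts (ι → ℂ) => supNormOn L p :=
  NonemptyCompacts.continuous_ciSup (continuous_eval p).norm

end SupNorm

section Sublevel

variable {S T : Set (MvPolynomial ι ℂ)} {c c' : MvPolynomial ι ℂ → ℝ}

theorem isClosed_polySublevel : IsClosed (polySublevel S c) := by
  simp only [polySublevel, ofPred_forall]
  exact isClosed_biInter fun p _ => isClosed_le (continuous_eval p).norm continuous_const

theorem isCompact_polySublevel (hX : ∀ i, X i ∈ S) : IsCompact (polySublevel S c) := by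
  refine (isCompact_univ_pi fun i => isCompact_closedBall 0 (c (X i))).of_isClosed_subset
    isClosed_polySublevel fun z hz => mem_univ_pi.2 fun i => ?_
  simpa using hz (X i) (hX i)

theorem polySublevel_subset_polySublevel (hST : S ⊆ T) (hc : ∀ p ∈ S, c' p ≤ c p) :
    polySublevel T c' ⊆ polySublevel S c :=
  fun _ hz p hp => (hz p (hST hp)).trans (hc p hp)

end Sublevel

section Hull

variable (L : NonemptyCompacts (ι → ℂ))

theorem subset_polyHull : (L : Set (ι → ℂ)) ⊆ polyHull L :=
  fun _ hx p => norm_eval_le_supNormOn L p hx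

theorem isCompact_polyHull : IsCompact (polyHull (L : Set (ι → ℂ))) := by
  have : polyHull (L : Set (ι → ℂ)) = polySublevel univ (supNormOn L) := by
    ext z; simp [polyHull, polySublevel]
  exact this ▸ isCompact_polySublevel fun _ => mem_univ _

noncomputable def polyHullCompacts : NonemptyCompacts (ι → ℂ) :=
  ⟨⟨polyHull L, isCompact_polyHull L⟩, L.nonempty.mono (subset_polyHull L)⟩

theorem mem_polyHull_of_forall_gaussianRatPoly [Fintype ι] {z : ι → ℂ}
    (hz : ∀ q, ‖eval z (gaussianRatPoly ι q)‖ ≤ supNormOn L (gaussianRatPoly ι q)) :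
    z ∈ polyHull L := by
  intro p
  refine le_of_forall_pos_lt_add fun ε hε => ?_
  obtain ⟨q, hq⟩ := exists_gaussianRatPoly_near p (L.isCompact.isBounded.insert z) (half_pos hε)
  have hqL : supNormOn L (gaussianRatPoly ι q) ≤ supNormOn L p + ε / 2 := by
    refine supNormOn_le L _ fun x hx => ?_
    have := hq x (mem_insert_of_mem z hx)
    have := norm_sub_norm_le (eval x (gaussianRatPoly ι q)) (eval x p)
    rw [norm_sub_rev] at this
    linarith [norm_eval_le_supNormOn L p hx]
  have := hq z (mem_insert z _)
  have := norm_sub_norm_le (eval z p) (eval z (gaussianRatPoly ι q))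
  linarith [hz q]

end Hull

section Approx

variable (r : ℕ → MvPolynomial ι ℂ)

def hullConstraints (k : ℕ) : Set (MvPolynomial ι ℂ) := range X ∪ r '' Iio k

instance [Finite ι] (k : ℕ) : Finite (hullConstraints r k) := by
  unfold hullConstraints; infer_instance

noncomputable def hullApprox (k : ℕ) (L : Set (ι → ℂ)) : Set (ι → ℂ) :=
  polySublevel (hullConstraints r k) fun p => dyadicCeil k (supNormOn L p)

theorem polyHull_subset_hullApprox (k : ℕ) (L : Set (ι → ℂ)) :
    polyHull L ⊆ hullApprox r k L :=
  fun _ hz p _ => (hz p).trans (le_dyadicCeil k _)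

theorem antitone_hullApprox (L : Set (ι → ℂ)) : Antitone fun k => hullApprox r k L :=
  fun _ _ hkl => polySublevel_subset_polySublevel
    (union_subset_union_right _ (image_mono (Iio_subset_Iio hkl)))
    fun _ _ => antitone_dyadicCeil _ hkl

theorem iInter_hullApprox_subset (L : Set (ι → ℂ)) :
    ⋂ k, hullApprox r k L ⊆ {z | ∀ j, ‖eval z (r j)‖ ≤ supNormOn L (r j)} := by
  intro z hz j
  refine ge_of_tendsto (tendsto_dyadicCeil _) (eventually_atTop.2 ⟨j + 1, fun k hk => ?_⟩)
  exact mem_iInter.1 hz k (r j) (Or.inr ⟨j, Nat.lt_of_succ_le hk, rfl⟩)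

theorem iInter_hullApprox_gaussianRatPoly [Fintype ι] {e : ℕ → MvPolynomial (Option ι) ℚ}
    (he : Function.Surjective e) (L : NonemptyCompacts (ι → ℂ)) :
    ⋂ k, hullApprox (gaussianRatPoly ι ∘ e) k L = polyHull L := by
  refine subset_antisymm (fun z hz => ?_) (subset_iInter fun k =>
    polyHull_subset_hullApprox (gaussianRatPoly ι ∘ e) k (L : Set (ι → ℂ)))
  refine mem_polyHull_of_forall_gaussianRatPoly L fun q => ?_
  obtain ⟨j, rfl⟩ := he q
  exact iInter_hullApprox_subset (gaussianRatPoly ι ∘ e) L hz j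

theorem hullApprox_congr {k : ℕ} {L L' : Set (ι → ℂ)}
    (h : ∀ p ∈ hullConstraints r k, ⌈supNormOn L p * 2 ^ k⌉ = ⌈supNormOn L' p * 2 ^ k⌉) :
    hullApprox r k L = hullApprox r k L' := by
  ext z
  exact forall₂_congr fun p hp => by simp only [dyadicCeil, h p hp]

noncomputable def hullApproxCompacts (k : ℕ) (L : NonemptyCompacts (ι → ℂ)) :
    NonemptyCompacts (ι → ℂ) :=
  ⟨⟨hullApprox r k L, isCompact_polySublevel fun i => Or.inl ⟨i, rfl⟩⟩,
    L.nonempty.mono ((subset_polyHull L).trans (polyHull_subset_hullApprox r k L))⟩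

variable [Fintype ι] [MeasurableSpace (NonemptyCompacts (ι → ℂ))]
  [BorelSpace (NonemptyCompacts (ι → ℂ))]

theorem measurable_hullApproxCompacts (k : ℕ) : Measurable (hullApproxCompacts r k) := by
  have hcode : Measurable fun (L : NonemptyCompacts (ι → ℂ)) (p : hullConstraints r k) =>
      ⌈supNormOn (L : Set (ι → ℂ)) p * 2 ^ k⌉ :=
    measurable_pi_lambda _ fun p =>
      ((continuous_supNormOn (p : MvPolynomial ι ℂ)).measurable.mul_const _).ceil
  exact hcode.of_factorsThrough_countable fun L L' h =>
    NonemptyCompacts.ext (hullApprox_congr r fun p hp => congrFun h ⟨p, hp⟩)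

theorem measurable_polyHullCompacts : Measurable (polyHullCompacts (ι := ι)) := by
  obtain ⟨e, he⟩ := exists_surjective_nat (MvPolynomial (Option ι) ℚ)
  refine measurable_of_tendsto_metrizable
    (measurable_hullApproxCompacts (gaussianRatPoly ι ∘ e)) (tendsto_pi_nhds.2 fun L => ?_)
  apply NonemptyCompacts.tendsto_of_antitone
  · exact antitone_hullApprox (gaussianRatPoly ι ∘ e) (L : Set (ι → ℂ))
  · exact (iInter_hullApprox_gaussianRatPoly he L).symm

end Approx

end PolynomialHull

open PolynomialHull

/-- Theorem `P-hull measurable` of the paper. Let `(Ω, 𝒜)` be a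
measurable space and `K : Ω → 𝒦′(ℂⁿ)` a random compact set (a measurable map into the
nonempty compact subsets of `ℂⁿ` with the Hausdorff distance and its Borel σ-algebra).
Then the polynomially convex hull of `K` is a random compact set: there is a measurable
`H : Ω → 𝒦′(ℂⁿ)` with `H ω` equal, as a set, to the polynomially convex hull
`K̂(ω) = { z : |p z| ≤ sup_{x ∈ K ω} |p x| for every polynomial p }` for every `ω`. -/
theorem polyHull_random_compact
    {Ω : Type*} [MeasurableSpace Ω] {n : ℕ}
    [MeasurableSpace (NonemptyCompacts (Fin n → ℂ))]
    [BorelSpace (NonemptyCompacts (Fin n → ℂ))]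
    (K : Ω → NonemptyCompacts (Fin n → ℂ)) (hK : Measurable K) :
    ∃ H : Ω → NonemptyCompacts (Fin n → ℂ), Measurable H ∧
      ∀ ω : Ω, (H ω : Set (Fin n → ℂ)) =
        {z : Fin n → ℂ | ∀ p : MvPolynomial (Fin n) ℂ,
          ‖eval z p‖ ≤ ⨆ x : (K ω : Set (Fin n → ℂ)), ‖eval (x : Fin n → ℂ) p‖} :=
  ⟨fun ω => polyHullCompacts (K ω), measurable_polyHullCompacts.comp hK, fun _ => rfl⟩
end

section
/- The hull mapping on 𝒦′(ℂⁿ) is measurable: there exists a Borel measurable map H : 𝒦′(ℂⁿ) → 𝒦′(ℂⁿ) such that for every nonempty compact set K ⊆ ℂⁿ, the set H(K) equals the polynomially convex hull K̂ of K. -/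
/-!
The hull `K̂` is the section at `K` of `{(K, z) | |p z| ≤ sup_K |p| for all p}`, which is closed in
`𝒦′(ℂⁿ) × ℂⁿ` because `K ↦ sup_K |p|` is continuous for the Vietoris topology (the topology of the
Hausdorff metric). Projecting this closed set along the σ-compact factor `ℂⁿ` shows that
`{K | K̂ ∩ C ≠ ∅}` is Borel for every closed `C`, and these sets generate the Borel σ-algebra of
`𝒦′(ℂⁿ)`.
-/

open Set TopologicalSpace MvPolynomial

namespace TopologicalSpace.NonemptyCompacts

variable {α : Type*} [TopologicalSpace α]

theorem continuous_iSup {β : Type*} [ConditionallyCompleteLinearOrder β] [TopologicalSpace β]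
    [OrderTopology β] {f : α → β} (hf : Continuous f) :
    Continuous fun K : NonemptyCompacts α => ⨆ x : (K : Set α), f x := by
  simp_rw [← sSup_image']
  refine continuous_iff_lower_upperSemicontinuous.2
    ⟨lowerSemicontinuous_iff_isOpen_preimage.2 fun y => ?_,
      upperSemicontinuous_iff_isOpen_preimage.2 fun y => ?_⟩
  · have h_eq : (fun K : NonemptyCompacts α => sSup (f '' K)) ⁻¹' Ioi y =
        {K : NonemptyCompacts α | ((K : Set α) ∩ f ⁻¹' Ioi y).Nonempty} := by
      ext K
      simp [lt_csSup_iff (K.isCompact.bddAbove_image hf.continuousOn) (K.nonempty.image f),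
        Set.Nonempty]
    exact h_eq ▸ isOpen_inter_nonempty_of_isOpen (isOpen_Ioi.preimage hf)
  · have h_eq : (fun K : NonemptyCompacts α => sSup (f '' K)) ⁻¹' Iio y =
        {K : NonemptyCompacts α | (K : Set α) ⊆ f ⁻¹' Iio y} := by
      ext K
      simp [K.isCompact.sSup_lt_iff_of_continuous K.nonempty hf.continuousOn, subset_def]
    exact h_eq ▸ isOpen_subsets_of_isOpen (isOpen_Iio.preimage hf)

theorem measurable_of_measurableSet_subsets_inter_nonempty {Ω : Type*} [MeasurableSpace Ω]
    [SecondCountableTopology α] [MeasurableSpace (NonemptyCompacts α)]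
    [BorelSpace (NonemptyCompacts α)] {F : Ω → NonemptyCompacts α}
    (h_subset : ∀ U, IsOpen U → MeasurableSet {ω | (F ω : Set α) ⊆ U})
    (h_inter : ∀ U, IsOpen U → MeasurableSet {ω | ((F ω : Set α) ∩ U).Nonempty}) :
    Measurable F := by
  have h_borel := borel_eq_generateFrom_of_subbasis (α := NonemptyCompacts α)
    (induced_generateFrom_eq (f := SetLike.coe))
  rw [BorelSpace.measurable_eq (α := NonemptyCompacts α), h_borel]
  refine measurable_generateFrom ?_
  rintro _ ⟨_, ⟨U, hU, rfl⟩ | ⟨U, hU, rfl⟩, rfl⟩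
  · exact h_subset U hU
  · exact h_inter U hU

theorem measurable_of_measurableSet_inter_nonempty {Ω : Type*} [MeasurableSpace Ω]
    [SecondCountableTopology α] [PerfectlyNormalSpace α] [MeasurableSpace (NonemptyCompacts α)]
    [BorelSpace (NonemptyCompacts α)] {F : Ω → NonemptyCompacts α}
    (h : ∀ C, IsClosed C → MeasurableSet {ω | ((F ω : Set α) ∩ C).Nonempty}) :
    Measurable F := by
  refine measurable_of_measurableSet_subsets_inter_nonempty (fun U hU => ?_) (fun U hU => ?_)
  · have h_eq : {ω | (F ω : Set α) ⊆ U} = {ω | ((F ω : Set α) ∩ Uᶜ).Nonempty}ᶜ := by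
      ext ω; simp [← not_disjoint_iff_nonempty_inter, disjoint_compl_right_iff_subset]
    exact h_eq ▸ (h Uᶜ hU.isClosed_compl).compl
  · obtain ⟨T, hT_open, hT_count, hT⟩ := hU.isClosed_compl.isGδ
    have hU_eq : U = ⋃ t ∈ T, tᶜ := by
      rw [← compl_compl U, hT, compl_sInter, sUnion_image]
    have h_eq : {ω | ((F ω : Set α) ∩ U).Nonempty} =
        ⋃ t ∈ T, {ω | ((F ω : Set α) ∩ tᶜ).Nonempty} := by
      ext ω; simp [hU_eq, inter_iUnion₂]
    exact h_eq ▸ MeasurableSet.biUnion hT_count fun t ht => h _ (hT_open t ht).isClosed_compl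

end TopologicalSpace.NonemptyCompacts

section ClosedGraph

variable {X α : Type*} [TopologicalSpace X] [TopologicalSpace α] {H : X → Set α}

theorem isClosed_setOf_inter_nonempty_of_isClosed_graph
    (hH : IsClosed {p : X × α | p.2 ∈ H p.1}) {K : Set α} (hK : IsCompact K) :
    IsClosed {x | (H x ∩ K).Nonempty} := by
  have : CompactSpace K := isCompact_iff_compactSpace.1 hK
  have h_eq : {x | (H x ∩ K).Nonempty} = Prod.fst '' {p : X × K | (p.2 : α) ∈ H p.1} := by
    ext x; simp [Set.Nonempty, and_comm]
  exact h_eq ▸ isClosedMap_fst_of_compactSpace _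
    (hH.preimage (continuous_fst.prodMk (continuous_subtype_val.comp continuous_snd)))

theorem measurableSet_setOf_inter_nonempty_of_isClosed_graph [SigmaCompactSpace α]
    [MeasurableSpace X] [OpensMeasurableSpace X]
    (hH : IsClosed {p : X × α | p.2 ∈ H p.1}) {C : Set α} (hC : IsClosed C) :
    MeasurableSet {x | (H x ∩ C).Nonempty} := by
  have h_eq : {x | (H x ∩ C).Nonempty} =
      ⋃ m, {x | (H x ∩ (C ∩ compactCovering α m)).Nonempty} := by
    ext x
    simp only [mem_ofPred_eq, mem_iUnion, ← nonempty_iUnion, ← inter_iUnion,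
      iUnion_compactCovering, inter_univ]
  rw [h_eq]
  exact MeasurableSet.iUnion fun m => (isClosed_setOf_inter_nonempty_of_isClosed_graph hH
    ((isCompact_compactCovering α m).inter_left hC)).measurableSet

end ClosedGraph

section Hull

variable {α ι β : Type*} [TopologicalSpace α] [ConditionallyCompleteLinearOrder β]
  [TopologicalSpace β] [OrderTopology β] {f : ι → α → β}

def hullWrt (f : ι → α → β) (K : NonemptyCompacts α) : Set α :=
  {z | ∀ i, f i z ≤ ⨆ x : (K : Set α), f i x}

theorem isClosed_graph_hullWrt (hf : ∀ i, Continuous (f i)) :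
    IsClosed {p : NonemptyCompacts α × α | p.2 ∈ hullWrt f p.1} := by
  have h_eq : {p : NonemptyCompacts α × α | p.2 ∈ hullWrt f p.1} =
      ⋂ i, {p | f i p.2 ≤ ⨆ x : (p.1 : Set α), f i x} := by
    ext; simp [hullWrt]
  exact h_eq ▸ isClosed_iInter fun i => isClosed_le ((hf i).comp continuous_snd)
    ((NonemptyCompacts.continuous_iSup (hf i)).comp continuous_fst)

theorem isClosed_hullWrt (hf : ∀ i, Continuous (f i)) (K : NonemptyCompacts α) :
    IsClosed (hullWrt f K) :=
  (isClosed_graph_hullWrt hf).preimage (Continuous.prodMk_right K)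

theorem subset_hullWrt (hf : ∀ i, Continuous (f i)) (K : NonemptyCompacts α) :
    (K : Set α) ⊆ hullWrt f K := fun x hx i => by
  have h_bdd := K.isCompact.bddAbove_image (hf i).continuousOn
  rw [image_eq_range] at h_bdd
  exact le_ciSup h_bdd ⟨x, hx⟩

end Hull

section Polynomial

variable {σ 𝕜 : Type*} [Fintype σ] [NormedCommRing 𝕜]

theorem isBounded_hullWrt_norm_eval (K : NonemptyCompacts (σ → 𝕜)) :
    Bornology.IsBounded (hullWrt (fun (p : MvPolynomial σ 𝕜) z => ‖eval z p‖) K) := by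
  obtain ⟨C, hC⟩ := K.isCompact.isBounded.exists_norm_le
  obtain ⟨x₀, hx₀⟩ := K.nonempty
  have : Nonempty (K : Set (σ → 𝕜)) := K.nonempty.to_subtype
  refine isBounded_iff_forall_norm_le.2 ⟨C, fun z hz => ?_⟩
  refine (pi_norm_le_iff_of_nonneg ((norm_nonneg x₀).trans (hC x₀ hx₀))).2 fun i => ?_
  have h_coord := hz (X i)
  simp only [eval_X] at h_coord
  exact h_coord.trans (ciSup_le fun x => (norm_le_pi_norm (x : σ → 𝕜) i).trans (hC x x.2))

theorem isCompact_hullWrt_norm_eval [ProperSpace 𝕜] (K : NonemptyCompacts (σ → 𝕜)) :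
    IsCompact (hullWrt (fun (p : MvPolynomial σ 𝕜) z => ‖eval z p‖) K) :=
  Metric.isCompact_of_isClosed_isBounded
    (isClosed_hullWrt (fun p => (continuous_eval p).norm) K) (isBounded_hullWrt_norm_eval K)

end Polynomial

/-- Corollary `map P-hull measurable` of the paper. The polynomially
convex hull mapping on `𝒦′(ℂⁿ)` is measurable: there is a Borel measurable map
`H : 𝒦′(ℂⁿ) → 𝒦′(ℂⁿ)` such that for every nonempty compact `K ⊆ ℂⁿ`, `H K` equals, as a
set, the polynomially convex hull
`K̂ = { z : |p z| ≤ sup_{x ∈ K} |p x| for every polynomial p }`. -/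
theorem polyHull_map_measurable {n : ℕ}
    [MeasurableSpace (NonemptyCompacts (Fin n → ℂ))]
    [BorelSpace (NonemptyCompacts (Fin n → ℂ))] :
    ∃ H : NonemptyCompacts (Fin n → ℂ) → NonemptyCompacts (Fin n → ℂ),
      Measurable H ∧
      ∀ K : NonemptyCompacts (Fin n → ℂ), (H K : Set (Fin n → ℂ)) =
        {z : Fin n → ℂ | ∀ p : MvPolynomial (Fin n) ℂ,
          ‖eval z p‖ ≤ ⨆ x : (K : Set (Fin n → ℂ)), ‖eval (x : Fin n → ℂ) p‖} := by
  have hf (p : MvPolynomial (Fin n) ℂ) : Continuous fun z => ‖eval z p‖ :=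
    (continuous_eval p).norm
  refine ⟨fun K => ⟨⟨_, isCompact_hullWrt_norm_eval K⟩, K.nonempty.mono (subset_hullWrt hf K)⟩,
    ?_, fun K => rfl⟩
  exact NonemptyCompacts.measurable_of_measurableSet_inter_nonempty fun C hC =>
    measurableSet_setOf_inter_nonempty_of_isClosed_graph (isClosed_graph_hullWrt hf) hC
end

section
/- Let (Ω, 𝒜) be a measurable space and let K : Ω → 𝒦′(ℂⁿ) be a random compact set. Then the rationally convex hull of K is a random compact set: there exists a measurable map H : Ω → 𝒦′(ℂⁿ) such that for every ω ∈ Ω the set H(ω) equals the rationally convex hull R-hull(K(ω)) of K(ω). -/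
/-!
A point `z` lies in the rational hull of a compact set `A` iff every polynomial without zeros on
`A` has no zero at `z`. Hence the hull is monotone and continuous from above: if compact sets
`C m` decrease to `A`, a polynomial without zeros on `A` has none on some `C m`, so
`⋂ m, hull (C m) ⊆ hull A`.

Every such map `Φ` on the nonempty compact subsets of a proper metric space is Borel. Fix a
dense sequence `d` of nonempty compacts and approximate `A` from outside by the thickening of
`d k` by `2 ⬝ 3⁻¹ ^ m`, where `k` is the first index with `dist A (d k) < 3⁻¹ ^ m`. The index
is a measurable function of `A` with values in `ℕ`, the approximations decrease to `A`, so
their images decrease to `Φ A` and converge to it in the Hausdorff metric, and `Φ` is a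
pointwise limit of countably valued measurable maps.
-/

open TopologicalSpace MvPolynomial

namespace TopologicalSpace.NonemptyCompacts

open Metric Set Filter Topology

variable {α : Type*} [MetricSpace α]

theorem subset_cthickening_dist (A B : NonemptyCompacts α) :
    (A : Set α) ⊆ cthickening (dist A B) B := fun _ hx =>
  mem_cthickening_iff.2 <| (infEDist_le_hausdorffEDist_of_mem hx).trans_eq (edist_dist A B)

theorem cthickening_subset_cthickening_add_dist {δ : ℝ} (hδ : 0 ≤ δ) (A B : NonemptyCompacts α) :
    cthickening δ (A : Set α) ⊆ cthickening (δ + dist A B) B :=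
  (cthickening_subset_of_subset δ (subset_cthickening_dist A B)).trans
    (cthickening_cthickening_subset hδ dist_nonneg _)

theorem tendsto_atTop_of_antitone {C : ℕ → NonemptyCompacts α} {A : NonemptyCompacts α}
    (hC : Antitone C) (hAC : ∀ m, A ≤ C m) (hCA : ⋂ m, (C m : Set α) ⊆ A) :
    Tendsto C atTop (𝓝 A) := by
  refine Metric.tendsto_atTop.2 fun ε hε => ?_
  obtain ⟨N, hN⟩ : ∃ N, (C N : Set α) ⊆ thickening (ε / 2) A :=
    exists_subset_nhds_of_isCompact (SetLike.coe_mono.comp_antitone hC).directed_ge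
      (fun m => (C m).isCompact) (fun x hx => isOpen_thickening.mem_nhds
        (self_subset_thickening (half_pos hε) _ (hCA hx)))
  refine ⟨N, fun m hm => ?_⟩
  refine (hausdorffDist_le_of_mem_dist (half_pos hε).le (fun x hx => ?_) fun x hx =>
    ⟨x, hAC m hx, by simpa using (half_pos hε).le⟩).trans_lt (half_lt_self hε)
  obtain ⟨y, hy, hxy⟩ := mem_thickening_iff.1 (hN (hC hm hx))
  exact ⟨y, hy, hxy.le⟩

protected noncomputable def cthickening [ProperSpace α] (δ : ℝ) (A : NonemptyCompacts α) :
    NonemptyCompacts α :=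
  ⟨⟨cthickening δ A, A.isCompact.cthickening⟩, A.nonempty.mono (self_subset_cthickening _)⟩

section OuterApprox

variable {d : ℕ → NonemptyCompacts α} (hd : DenseRange d)

noncomputable def denseIndex (m : ℕ) (A : NonemptyCompacts α) : ℕ :=
  Nat.find (hd.exists_dist_lt A (pow_pos (by norm_num : (0 : ℝ) < 3⁻¹) m))

theorem dist_denseIndex_lt (m : ℕ) (A : NonemptyCompacts α) :
    dist A (d (denseIndex hd m A)) < 3⁻¹ ^ m :=
  Nat.find_spec (hd.exists_dist_lt A (pow_pos (by norm_num : (0 : ℝ) < 3⁻¹) m))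

theorem measurable_denseIndex [MeasurableSpace (NonemptyCompacts α)]
    [BorelSpace (NonemptyCompacts α)] (m : ℕ) : Measurable (denseIndex hd m) := by
  refine measurable_to_countable' fun k => ?_
  have hfiber : denseIndex hd m ⁻¹' {k} =
      ball (d k) (3⁻¹ ^ m) ∩ ⋂ i ∈ Iio k, (ball (d i) (3⁻¹ ^ m))ᶜ := by
    ext A
    simp [denseIndex, Nat.find_eq_iff]
  rw [hfiber]
  exact measurableSet_ball.inter <|
    .biInter (to_countable _) fun i _ => measurableSet_ball.compl

variable [ProperSpace α]

-- The factor `3⁻¹` makes these sets decrease in `m`: `2 r / 3 + (r / 3 + r) = 2 r`.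
noncomputable def outerApprox (m : ℕ) (A : NonemptyCompacts α) : NonemptyCompacts α :=
  (d (denseIndex hd m A)).cthickening (2 * 3⁻¹ ^ m)

theorem le_outerApprox (m : ℕ) (A : NonemptyCompacts α) : A ≤ outerApprox hd m A :=
  (subset_cthickening_dist _ _).trans <| cthickening_mono (by
    linarith [dist_denseIndex_lt hd m A, pow_pos (by norm_num : (0 : ℝ) < 3⁻¹) m]) _

theorem antitone_outerApprox (A : NonemptyCompacts α) : Antitone (outerApprox hd · A) := by
  refine antitone_nat_of_succ_le fun m => ?_
  have hdist : dist (d (denseIndex hd (m + 1) A)) (d (denseIndex hd m A)) <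
      3⁻¹ ^ (m + 1) + 3⁻¹ ^ m :=
    (dist_triangle_left _ _ A).trans_lt
      (add_lt_add (dist_denseIndex_lt hd _ A) (dist_denseIndex_lt hd _ A))
  refine (cthickening_subset_cthickening_add_dist (by positivity) _ _).trans <|
    cthickening_mono ?_ _
  rw [pow_succ] at hdist ⊢
  linarith

theorem outerApprox_subset_cthickening (m : ℕ) (A : NonemptyCompacts α) :
    (outerApprox hd m A : Set α) ⊆ cthickening (3 * 3⁻¹ ^ m) A := by
  refine (cthickening_subset_cthickening_add_dist (by positivity) _ _).trans <|
    cthickening_mono ?_ _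
  rw [dist_comm]
  linarith [dist_denseIndex_lt hd m A]

theorem iInter_outerApprox (A : NonemptyCompacts α) :
    ⋂ m, (outerApprox hd m A : Set α) = A := by
  refine (subset_iInter fun m => le_outerApprox hd m A).antisymm' fun x hx => ?_
  rw [← A.isCompact.isClosed.closure_eq, closure_eq_iInter_cthickening]
  refine mem_iInter₂.2 fun δ hδ => ?_
  obtain ⟨m, hm⟩ := exists_pow_lt_of_lt_one (by positivity : 0 < δ / 3)
    (by norm_num : (3 : ℝ)⁻¹ < 1)
  exact cthickening_mono (by linarith) _
    (outerApprox_subset_cthickening hd m A (mem_iInter.1 hx m))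

end OuterApprox

theorem measurable_of_monotone_of_iInter_subset [MeasurableSpace (NonemptyCompacts α)]
    [BorelSpace (NonemptyCompacts α)] [ProperSpace α]
    {Φ : NonemptyCompacts α → NonemptyCompacts α} (hmono : Monotone Φ)
    (hΦ : ∀ (C : ℕ → NonemptyCompacts α) (A : NonemptyCompacts α), Antitone C →
      ⋂ m, (C m : Set α) = A → ⋂ m, (Φ (C m) : Set α) ⊆ Φ A) :
    Measurable Φ := by
  rcases isEmpty_or_nonempty (NonemptyCompacts α) with hα | hα
  · exact measurable_of_empty Φ
  obtain ⟨d, hd⟩ := exists_dense_seq (NonemptyCompacts α)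
  have happrox : ∀ m, Measurable fun A => Φ (outerApprox hd m A) := fun m =>
    (measurable_from_nat (f := fun k => Φ ((d k).cthickening (2 * 3⁻¹ ^ m)))).comp
      (measurable_denseIndex hd m)
  refine measurable_of_tendsto_metrizable' atTop happrox (tendsto_pi_nhds.2 fun A => ?_)
  exact tendsto_atTop_of_antitone (hmono.comp_antitone (antitone_outerApprox hd A))
    (fun m => hmono (le_outerApprox hd m A))
    (hΦ _ A (antitone_outerApprox hd A) (iInter_outerApprox hd A))

end TopologicalSpace.NonemptyCompacts

section RationalHull

open Metric Set

variable {ι : Type*}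

def rationalHull (A : Set (ι → ℂ)) : Set (ι → ℂ) :=
  {z | ∀ p q : MvPolynomial ι ℂ, (∀ x ∈ A, eval x q ≠ 0) →
    ‖eval z p‖ ≤ ‖eval z q‖ * ⨆ x : A, ‖eval (x : ι → ℂ) p / eval (x : ι → ℂ) q‖}

theorem bddAbove_range_norm_eval_div {A : Set (ι → ℂ)} (hA : IsCompact A)
    (p : MvPolynomial ι ℂ) {q : MvPolynomial ι ℂ} (hq : ∀ x ∈ A, eval x q ≠ 0) :
    BddAbove (range fun x : A => ‖eval (x : ι → ℂ) p / eval (x : ι → ℂ) q‖) := by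
  have h := hA.bddAbove_image
    ((continuous_eval p).continuousOn.div (continuous_eval q).continuousOn hq).norm
  rwa [image_eq_range] at h

theorem mem_rationalHull_iff {A : Set (ι → ℂ)} (hA : IsCompact A) {z : ι → ℂ} :
    z ∈ rationalHull A ↔ ∀ q : MvPolynomial ι ℂ, (∀ x ∈ A, eval x q ≠ 0) → eval z q ≠ 0 := by
  constructor
  · intro hz q hq hqz
    have h := hz 1 q hq
    norm_num [hqz] at h
  intro hz p q hq
  -- `p ⬝ q(z) - q ⬝ p(z)` vanishes at `z`, hence somewhere on `A`, where `p / q = p(z) / q(z)`.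
  obtain ⟨x, hxA, hx⟩ : ∃ x ∈ A, eval x (p * C (eval z q) - q * C (eval z p)) = 0 := by
    by_contra! h
    exact hz _ h (by simp [mul_comm])
  have hpz : eval z p = eval x p / eval x q * eval z q := by
    simp only [map_sub, map_mul, eval_C, sub_eq_zero] at hx
    rw [div_mul_eq_mul_div, eq_div_iff (hq x hxA)]
    linear_combination -hx
  calc ‖eval z p‖ = ‖eval z q‖ * ‖eval x p / eval x q‖ := by rw [hpz, norm_mul, mul_comm]
    _ ≤ _ := by
      gcongr
      exact le_ciSup (bddAbove_range_norm_eval_div hA p hq) ⟨x, hxA⟩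

theorem subset_rationalHull {A : Set (ι → ℂ)} (hA : IsCompact A) : A ⊆ rationalHull A :=
  fun z hz => (mem_rationalHull_iff hA).2 fun _ hq => hq z hz

theorem rationalHull_mono {A B : Set (ι → ℂ)} (hA : IsCompact A) (hB : IsCompact B)
    (hAB : A ⊆ B) : rationalHull A ⊆ rationalHull B := fun _ hz =>
  (mem_rationalHull_iff hB).2 fun q hq => (mem_rationalHull_iff hA).1 hz q fun x hx => hq x (hAB hx)

theorem isClosed_rationalHull (A : Set (ι → ℂ)) : IsClosed (rationalHull A) := by
  have hinter : rationalHull A = ⋂ (p) (q) (_ : ∀ x ∈ A, eval x q ≠ 0),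
      {z | ‖eval z p‖ ≤ ‖eval z q‖ * ⨆ x : A, ‖eval (x : ι → ℂ) p / eval (x : ι → ℂ) q‖} := by
    ext z
    simp only [rationalHull, mem_ofPred_eq, mem_iInter]
  rw [hinter]
  exact isClosed_iInter fun p => isClosed_iInter fun q => isClosed_iInter fun _ =>
    isClosed_le (continuous_eval p).norm ((continuous_eval q).norm.mul continuous_const)

theorem iInter_rationalHull_subset {C : ℕ → Set (ι → ℂ)} {A : Set (ι → ℂ)}
    (hC : ∀ m, IsCompact (C m)) (hC_anti : Antitone C) (hA : IsCompact A)
    (hCA : ⋂ m, C m ⊆ A) : ⋂ m, rationalHull (C m) ⊆ rationalHull A := by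
  refine fun z hz => (mem_rationalHull_iff hA).2 fun q hq => ?_
  obtain ⟨m, hm⟩ := exists_subset_nhds_of_isCompact hC_anti.directed_ge hC fun x hx =>
    (isOpen_ne_fun (continuous_eval q) continuous_const).mem_nhds (hq x (hCA hx))
  exact (mem_rationalHull_iff (hC m)).1 (mem_iInter.1 hz m) q fun x hx => hm hx

variable [Fintype ι]

theorem isCompact_rationalHull {A : Set (ι → ℂ)} (hA : IsCompact A) :
    IsCompact (rationalHull A) := by
  obtain ⟨R, hR, hAR⟩ := hA.isBounded.exists_pos_norm_le
  refine isCompact_of_isClosed_isBounded (isClosed_rationalHull A)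
    ((isBounded_closedBall (x := 0) (r := R)).subset fun z hz => mem_closedBall_zero_iff.2 ?_)
  refine (pi_norm_le_iff_of_nonneg hR.le).2 fun i => ?_
  have hzi := hz (X i) 1 (by simp)
  simp only [eval_X, map_one, norm_one, one_mul, div_one] at hzi
  exact hzi.trans <|
    Real.iSup_le (fun x => (norm_le_pi_norm (x : ι → ℂ) i).trans (hAR x x.2)) hR.le

end RationalHull

namespace TopologicalSpace.NonemptyCompacts

variable {ι : Type*} [Fintype ι]

protected def rationalHull (A : NonemptyCompacts (ι → ℂ)) : NonemptyCompacts (ι → ℂ) :=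
  ⟨⟨rationalHull A, isCompact_rationalHull A.isCompact⟩,
    A.nonempty.mono (subset_rationalHull A.isCompact)⟩

theorem measurable_rationalHull [MeasurableSpace (NonemptyCompacts (ι → ℂ))]
    [BorelSpace (NonemptyCompacts (ι → ℂ))] :
    Measurable (NonemptyCompacts.rationalHull : NonemptyCompacts (ι → ℂ) → _) :=
  measurable_of_monotone_of_iInter_subset
    (fun A B hAB => rationalHull_mono A.isCompact B.isCompact hAB)
    fun C A hC hCA => iInter_rationalHull_subset (fun m => (C m).isCompact)
      (SetLike.coe_mono.comp_antitone hC) A.isCompact hCA.subset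

end TopologicalSpace.NonemptyCompacts

/-- Theorem `R-hull measurable` of the paper. Let `(Ω, 𝒜)` be a
measurable space and `K : Ω → 𝒦′(ℂⁿ)` a random compact set. Then the rationally convex
hull of `K` is a random compact set: there is a measurable `H : Ω → 𝒦′(ℂⁿ)` with `H ω`
equal, as a set, to the rationally convex hull
`R-hull (K ω) = { z : |p z| ≤ |q z| ⬝ sup_{x ∈ K ω} |p x / q x| for all polynomials p, q
with q nonvanishing on K ω }` for every `ω`. -/
theorem rationalHull_random_compact
    {Ω : Type*} [MeasurableSpace Ω] {n : ℕ}
    [MeasurableSpace (NonemptyCompacts (Fin n → ℂ))]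
    [BorelSpace (NonemptyCompacts (Fin n → ℂ))]
    (K : Ω → NonemptyCompacts (Fin n → ℂ)) (hK : Measurable K) :
    ∃ H : Ω → NonemptyCompacts (Fin n → ℂ), Measurable H ∧
      ∀ ω : Ω, (H ω : Set (Fin n → ℂ)) =
        {z : Fin n → ℂ | ∀ p q : MvPolynomial (Fin n) ℂ,
          (∀ x ∈ (K ω : Set (Fin n → ℂ)), eval x q ≠ 0) →
          ‖eval z p‖ ≤ ‖eval z q‖ *
            ⨆ x : (K ω : Set (Fin n → ℂ)), ‖eval (x : Fin n → ℂ) p / eval (x : Fin n → ℂ) q‖} :=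
  ⟨fun ω => (K ω).rationalHull, NonemptyCompacts.measurable_rationalHull.comp hK, fun _ => rfl⟩
end

section
/- Let (Ω, 𝒜) be a measurable space and let K : Ω → 𝒦′(ℂⁿ) be a random compact set. Then the Siciak extremal function of K is a random function: for every z ∈ ℂⁿ, the function ω ↦ Φ_{K(ω)}(z), taking values in [0, ∞], is measurable; consequently the pluricomplex Green function ω ↦ V_{K(ω)}(z) = log Φ_{K(ω)}(z) is measurable for every z ∈ ℂⁿ. -/
/-!
`K ↦ Φ_K(z)` is lower semicontinuous on nonempty compacts, hence Borel measurable, and `log` is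
monotone. For lower semicontinuity, replace the constraint `‖p‖ ≤ 1` on `K` by `‖p‖ < 1`: this does
not change `Φ_K(z)`, because `(s ^ deg p) • p` is strictly admissible for `0 < s < 1` and its root
term is `s` times that of `p`. The strict constraint says `K ⊆ {‖p‖ < 1}`, an open condition on `K`
in the Hausdorff-metric topology, which is the Vietoris topology; a supremum of constants over
open index conditions is lower semicontinuous.
-/

open TopologicalSpace MvPolynomial
open scoped ENNReal

theorem lowerSemicontinuous_biSup_of_isOpen {α ι δ : Type*} [TopologicalSpace α]
    [CompleteLinearOrder δ] {S : α → Set ι} (hS : ∀ i, IsOpen {x | i ∈ S x}) (f : ι → δ) :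
    LowerSemicontinuous fun x => ⨆ i ∈ S x, f i := by
  intro x t ht
  obtain ⟨i, hi, hti⟩ := lt_biSup_iff.1 ht
  filter_upwards [(hS i).mem_nhds hi] with y hy
  exact hti.trans_le (le_biSup f hy)

theorem MvPolynomial.totalDegree_smul_of_ne_zero {σ K : Type*} [Field K] {c : K} (hc : c ≠ 0)
    (p : MvPolynomial σ K) : (c • p).totalDegree = p.totalDegree :=
  (totalDegree_smul_le c p).antisymm <| by
    simpa only [inv_smul_smul₀ hc] using totalDegree_smul_le c⁻¹ (c • p)

section

variable {σ : Type*}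

theorem MvPolynomial.norm_eval_ofReal_smul (c : ℝ) (p : MvPolynomial σ ℂ) (x : σ → ℂ) :
    ‖eval x ((c : ℂ) • p)‖ = |c| * ‖eval x p‖ := by
  rw [smul_eval, norm_mul, Complex.norm_real, Real.norm_eq_abs]

theorem MvPolynomial.norm_eval_smul_pow_totalDegree_rpow {p : MvPolynomial σ ℂ}
    (hp : p.totalDegree ≠ 0) {s : ℝ} (hs : 0 < s) (z : σ → ℂ) :
    ‖eval z (((s ^ p.totalDegree : ℝ) : ℂ) • p)‖ ^
        (1 / ((((s ^ p.totalDegree : ℝ) : ℂ) • p).totalDegree : ℝ)) =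
      s * ‖eval z p‖ ^ (1 / (p.totalDegree : ℝ)) := by
  have hc : ((s ^ p.totalDegree : ℝ) : ℂ) ≠ 0 := by exact_mod_cast (pow_pos hs _).ne'
  rw [totalDegree_smul_of_ne_zero hc, norm_eval_ofReal_smul, abs_of_pos (by positivity),
    Real.mul_rpow (by positivity) (norm_nonneg _), one_div,
    Real.pow_rpow_inv_natCast hs.le hp]

noncomputable def siciakExtremal (K : Set (σ → ℂ)) (z : σ → ℂ) : ℝ≥0∞ :=
  ⨆ p ∈ {p : MvPolynomial σ ℂ | 1 ≤ p.totalDegree ∧ ∀ x ∈ K, ‖eval x p‖ ≤ 1},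
    ENNReal.ofReal (‖eval z p‖ ^ (1 / (p.totalDegree : ℝ)))

theorem siciakExtremal_eq_iSup_norm_lt (K : Set (σ → ℂ)) (z : σ → ℂ) :
    siciakExtremal K z =
      ⨆ p ∈ {p : MvPolynomial σ ℂ | 1 ≤ p.totalDegree ∧ ∀ x ∈ K, ‖eval x p‖ < 1},
        ENNReal.ofReal (‖eval z p‖ ^ (1 / (p.totalDegree : ℝ))) := by
  refine le_antisymm (iSup₂_le fun p ⟨hd, hpK⟩ => ENNReal.le_of_forall_lt_one_mul_le
    fun a ha => ?_) (biSup_mono fun p hp => ⟨hp.1, fun x hx => (hp.2 x hx).le⟩)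
  rcases eq_or_ne a 0 with rfl | ha0
  · simp
  set s := a.toReal
  have hs : 0 < s := ENNReal.toReal_pos ha0 ha.ne_top
  have hs1 : s < 1 := by
    simpa [s] using (ENNReal.toReal_lt_toReal ha.ne_top ENNReal.one_ne_top).2 ha
  set q : MvPolynomial σ ℂ := ((s ^ p.totalDegree : ℝ) : ℂ) • p
  have hq : 1 ≤ q.totalDegree ∧ ∀ x ∈ K, ‖eval x q‖ < 1 := by
    refine ⟨?_, fun x hx => ?_⟩
    · rwa [totalDegree_smul_of_ne_zero (by exact_mod_cast (pow_pos hs _).ne')]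
    · rw [norm_eval_ofReal_smul, abs_of_pos (pow_pos hs _)]
      exact (mul_le_of_le_one_right (pow_pos hs _).le (hpK x hx)).trans_lt
        (pow_lt_one₀ hs.le hs1 (by omega))
  calc a * ENNReal.ofReal (‖eval z p‖ ^ (1 / (p.totalDegree : ℝ)))
      = ENNReal.ofReal (‖eval z q‖ ^ (1 / (q.totalDegree : ℝ))) := by
        rw [norm_eval_smul_pow_totalDegree_rpow (by omega) hs, ENNReal.ofReal_mul hs.le,
          ENNReal.ofReal_toReal ha.ne_top]
    _ ≤ _ := le_biSup (fun p => ENNReal.ofReal (‖eval z p‖ ^ (1 / (p.totalDegree : ℝ)))) hq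

theorem lowerSemicontinuous_siciakExtremal (z : σ → ℂ) :
    LowerSemicontinuous fun K : NonemptyCompacts (σ → ℂ) => siciakExtremal K z := by
  simp_rw [siciakExtremal_eq_iSup_norm_lt]
  refine lowerSemicontinuous_biSup_of_isOpen (fun p => ?_) _
  exact isOpen_const.inter <| NonemptyCompacts.isOpen_subsets_of_isOpen <|
    isOpen_lt (continuous_eval p).norm continuous_const

end

/-- Theorem `siciak` of the paper. Let `(Ω, 𝒜)` be a measurable space
and `K : Ω → 𝒦′(ℂⁿ)` a random compact set. Then the Siciak extremal function
`Φ_{K(ω)}(z) = sup { |p z|^(1/deg p) : deg p ≥ 1, sup_{x ∈ K ω} |p x| ≤ 1 }`, with values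
in `[0, ∞]`, is a random function: for every `z`, `ω ↦ Φ_{K(ω)}(z)` is measurable;
consequently the pluricomplex Green function `ω ↦ V_{K(ω)}(z) = log Φ_{K(ω)}(z)` is
measurable for every `z`. -/
theorem siciak_extremal_function_random
    {Ω : Type*} [MeasurableSpace Ω] {n : ℕ}
    [MeasurableSpace (NonemptyCompacts (Fin n → ℂ))]
    [BorelSpace (NonemptyCompacts (Fin n → ℂ))]
    (K : Ω → NonemptyCompacts (Fin n → ℂ)) (hK : Measurable K)
    (z : Fin n → ℂ) :
    Measurable (fun ω =>
      ⨆ p ∈ {p : MvPolynomial (Fin n) ℂ |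
          1 ≤ p.totalDegree ∧ ∀ x ∈ (K ω : Set (Fin n → ℂ)), ‖eval x p‖ ≤ 1},
        ENNReal.ofReal (‖eval z p‖ ^ (1 / (p.totalDegree : ℝ)))) ∧
    Measurable (fun ω => ENNReal.log
      (⨆ p ∈ {p : MvPolynomial (Fin n) ℂ |
          1 ≤ p.totalDegree ∧ ∀ x ∈ (K ω : Set (Fin n → ℂ)), ‖eval x p‖ ≤ 1},
        ENNReal.ofReal (‖eval z p‖ ^ (1 / (p.totalDegree : ℝ))))) := by
  have hΦ : Measurable fun ω => siciakExtremal (K ω : Set (Fin n → ℂ)) z :=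
    (lowerSemicontinuous_siciakExtremal z).measurable.comp hK
  exact ⟨hΦ, ENNReal.log_monotone.measurable.comp hΦ⟩
end

section
/- Let (Ω, 𝒜) be a measurable space and let K : Ω → 𝒦′(ℂⁿ) be a uniformly separable random compact set, i.e., there is a countable set E ⊆ ℂⁿ such that E ∩ K(ω) is dense in K(ω) for every ω. Let f and f₁, f₂, … be generalized random continuous functions on K (each fⱼ(ω,·) and f(ω,·) is continuous on K(ω), and for every z with K⁻¹(z) := {ω : z ∈ K(ω)} nonempty, fⱼ(·,z) and f(·,z) are measurable on K⁻¹(z)). Suppose that for every ω ∈ Ω, fⱼ(ω,·) → f(ω,·) uniformly on K(ω). Then there exists a sequence F₁, F₂, … of generalized random continuous functions on K such that Fⱼ → f uniformly on the graph Gr K = {(ω,z) : z ∈ K(ω)} (i.e., sup over all ω and all z ∈ K(ω) of |Fⱼ(ω,z) − f(ω,z)| tends to 0), and moreover for every ω ∈ Ω and j ∈ ℕ there exists k ∈ ℕ with Fⱼ(ω,·) = f_k(ω,·) on K(ω). -/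
open TopologicalSpace Filter Metric

/-- Theorem `T:unifsep` of the paper. Let `K : Ω → 𝒦′(ℂⁿ)` be a
uniformly separable random compact set (there is a countable `E ⊆ ℂⁿ` with `E ∩ K ω`
dense in `K ω` for every `ω`). Let `f` and `f₁, f₂, …` be generalized random continuous
functions on `K` (continuous on each `K ω`, and measurable in `ω` on
`K⁻¹(z) = {ω : z ∈ K ω}` for each `z`), and suppose `fⱼ(ω, ·) → f(ω, ·)` uniformly on
`K ω` for every `ω`. Then there is a sequence `F₁, F₂, …` of generalized random
continuous functions on `K` converging to `f` uniformly on the graph of `K`, and such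
that for all `ω` and `j` there is `k` with `Fⱼ(ω, ·) = f_k(ω, ·)` on `K ω`. -/
theorem uniformly_separable_selection
    {Ω : Type*} [MeasurableSpace Ω] {n : ℕ}
    [MeasurableSpace (NonemptyCompacts (Fin n → ℂ))]
    [BorelSpace (NonemptyCompacts (Fin n → ℂ))]
    (K : Ω → NonemptyCompacts (Fin n → ℂ)) (hK : Measurable K)
    (E : Set (Fin n → ℂ)) (hE_count : E.Countable)
    (hE_dense : ∀ ω : Ω, (K ω : Set (Fin n → ℂ)) ⊆ closure (E ∩ (K ω : Set (Fin n → ℂ))))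
    (f : Ω → (Fin n → ℂ) → ℂ) (fseq : ℕ → Ω → (Fin n → ℂ) → ℂ)
    (hf_cont : ∀ ω : Ω, ContinuousOn (f ω) (K ω))
    (hf_meas : ∀ z : Fin n → ℂ, Measurable fun ω : {ω : Ω // z ∈ K ω} => f ω z)
    (hfseq_cont : ∀ (j : ℕ) (ω : Ω), ContinuousOn (fseq j ω) (K ω))
    (hfseq_meas : ∀ (j : ℕ) (z : Fin n → ℂ), Measurable fun ω : {ω : Ω // z ∈ K ω} => fseq j ω z)
    (hconv : ∀ ω : Ω, TendstoUniformlyOn (fun j => fseq j ω) (f ω) atTop (K ω)) :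
    ∃ F : ℕ → Ω → (Fin n → ℂ) → ℂ,
      (∀ (j : ℕ) (ω : Ω), ContinuousOn (F j ω) (K ω)) ∧
      (∀ (j : ℕ) (z : Fin n → ℂ), Measurable fun ω : {ω : Ω // z ∈ K ω} => F j ω z) ∧
      (∀ ε > (0 : ℝ), ∃ N : ℕ, ∀ j ≥ N, ∀ ω : Ω, ∀ z ∈ (K ω : Set (Fin n → ℂ)),
        ‖F j ω z - f ω z‖ < ε) ∧
      (∀ (j : ℕ) (ω : Ω), ∃ k : ℕ, ∀ z ∈ (K ω : Set (Fin n → ℂ)), F j ω z = fseq k ω z) := by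
  classical
  -- K⁻¹(z) is measurable
  have hinv : ∀ z : Fin n → ℂ, MeasurableSet {ω : Ω | z ∈ K ω} := by
    intro z
    have hcont : Continuous fun L : NonemptyCompacts (Fin n → ℂ) => infDist z (L : Set _) :=
      (lipschitz_infDist_set z).continuous
    have heq : {ω : Ω | z ∈ K ω}
        = K ⁻¹' {L : NonemptyCompacts (Fin n → ℂ) | infDist z (L : Set _) ≤ 0} := by
      ext ω
      simp only [Set.mem_setOf_eq, Set.mem_preimage]
      constructor
      · intro hz; simp [infDist_zero_of_mem hz]
      · intro h
        have h0 : infDist z (K ω : Set _) = 0 := le_antisymm h infDist_nonneg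
        exact ((K ω).isCompact.isClosed.mem_iff_infDist_zero (K ω).nonempty).2 h0
    rw [heq]
    exact hK ((isClosed_le hcont continuous_const).measurableSet)
  -- the predicate
  set p : ℕ → ℕ → Ω → Prop := fun j k ω =>
    ∀ z ∈ E ∩ (K ω : Set (Fin n → ℂ)), ‖fseq k ω z - f ω z‖ ≤ 1 / (j + 1) with hp_def
  -- existence
  have hex : ∀ (j : ℕ) (ω : Ω), ∃ k, p j k ω := by
    intro j ω
    have hpos : (0 : ℝ) < 1 / (j + 1) := by positivity
    obtain ⟨k, hk⟩ :=
      ((Metric.tendstoUniformlyOn_iff.1 (hconv ω)) (1 / (j + 1)) hpos).exists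
    refine ⟨k, fun z hz => ?_⟩
    have := hk z hz.2
    rw [dist_comm, dist_eq_norm] at this
    exact this.le
  -- measurability of the predicate
  have hpmeas : ∀ j k, MeasurableSet {ω : Ω | p j k ω} := by
    intro j k
    have : {ω : Ω | p j k ω} =
        ⋂ z ∈ E, ({ω : Ω | z ∈ K ω}ᶜ ∪
          Subtype.val '' {ω : {ω : Ω // z ∈ K ω} | ‖fseq k ω z - f ω z‖ ≤ 1 / (j + 1)}) := by
      ext ω
      simp only [Set.mem_setOf_eq, Set.mem_iInter, Set.mem_union, Set.mem_compl_iff,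
        Set.mem_image, hp_def]
      constructor
      · intro h z hz
        by_cases hzK : z ∈ K ω
        · exact Or.inr ⟨⟨ω, hzK⟩, h z ⟨hz, hzK⟩, rfl⟩
        · exact Or.inl hzK
      · intro h z hz
        rcases h z hz.1 with h1 | ⟨⟨ω', hω'⟩, hle, hval⟩
        · exact absurd hz.2 h1
        · cases hval; exact hle
    rw [this]
    refine MeasurableSet.biInter hE_count fun z _ => ((hinv z).compl.union ?_)
    refine (hinv z).subtype_image ?_
    exact measurableSet_le (((hfseq_meas k z).sub (hf_meas z)).norm) measurable_const
  -- the selection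
  refine ⟨fun j ω => fseq (Nat.find (hex j ω)) ω, ?_, ?_, ?_, ?_⟩
  · intro j ω; exact hfseq_cont _ ω
  · intro j z
    have := Measurable.find (α := {ω : Ω // z ∈ K ω}) (β := ℂ)
      (f := fun k ω => fseq k ω z) (p := fun k ω => p j k ω.val)
      (fun k => hfseq_meas k z)
      (fun k => measurable_subtype_coe (hpmeas j k))
      (fun ω => hex j ω.val)
    exact this
  · intro ε hε
    obtain ⟨N, hN⟩ := exists_nat_one_div_lt hε
    refine ⟨N, fun j hj ω z hz => ?_⟩
    -- the bound holds on E ∩ K ω, extend by density/continuity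
    have hfind := Nat.find_spec (hex j ω)
    set k := Nat.find (hex j ω)
    have hcont : ContinuousOn (fun z => ‖fseq k ω z - f ω z‖)
        (K ω : Set (Fin n → ℂ)) :=
      ((hfseq_cont k ω).sub (hf_cont ω)).norm
    have hbound : ‖fseq k ω z - f ω z‖ ≤ 1 / (j + 1) := by
      have hzcl : z ∈ closure (E ∩ (K ω : Set (Fin n → ℂ))) := hE_dense ω hz
      have hne : (nhdsWithin z (E ∩ (K ω : Set (Fin n → ℂ)))).NeBot :=
        mem_closure_iff_nhdsWithin_neBot.1 hzcl
      have htend : Tendsto (fun z => ‖fseq k ω z - f ω z‖)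
          (nhdsWithin z (E ∩ (K ω : Set (Fin n → ℂ)))) (nhds (‖fseq k ω z - f ω z‖)) :=
        (hcont z hz).mono_left (nhdsWithin_mono z Set.inter_subset_right)
      exact le_of_tendsto htend (eventually_nhdsWithin_of_forall fun y hy => hfind y hy)
    have hj1 : (1 : ℝ) / (j + 1) ≤ 1 / (N + 1) := by
      apply one_div_le_one_div_of_le
      · positivity
      · exact_mod_cast Nat.succ_le_succ hj
    calc ‖fseq k ω z - f ω z‖ ≤ 1 / (j + 1) := hbound
      _ ≤ 1 / (N + 1) := hj1
      _ < ε := hN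
  · intro j ω
    exact ⟨Nat.find (hex j ω), fun z _ => rfl⟩
end

section
/- Let K ⊆ ℂⁿ be a nonempty compact set, (Ω, 𝒜) a measurable space, and f : Ω × K → ℂ a map. Then the following are equivalent: (1) there exists a sequence r₁, r₂, … of random rational functions pole-free on K such that for each ω ∈ Ω, rⱼ(ω,·) → f(ω,·) uniformly on K; (2) there exists a sequence r₁, r₂, … of random rational functions pole-free on K such that rⱼ → f uniformly on Ω × K, i.e., sup_{(ω,z) ∈ Ω × K} |rⱼ(ω,z) − f(ω,z)| → 0. -/
/-!
Given `r k ω → f ω` uniformly on `K` for each `ω`, reindex the sequence measurably: let `σ j ω` be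
the first `k` with `|r k ω - f ω| ≤ 1/(j+1)` on a countable dense subset `D ⊆ K`. By continuity
the bound holds on all of `K`, so `r (σ j ω) ω → f ω` uniformly in `ω` too. As `D` is countable and
`f ω z` is measurable in `ω` as a pointwise limit, the event defining `σ j` is measurable, hence so
is `ω ↦ r (σ j ω) ω z`, and each `r (σ j ·) ·` is again a random rational function.
-/

open MvPolynomial Filter

/-- A sequence member `r : Ω → ℂⁿ → ℂ` is a random rational function pole-free on `K`:
`r (·, z)` is measurable for each `z ∈ K` and, for each `ω`, on `K` it agrees with a
quotient `p / q` of polynomials with `q` nonvanishing on `K`. -/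
def IsRandomRationalOn {Ω : Type*} [MeasurableSpace Ω] {n : ℕ}
    (r : Ω → (Fin n → ℂ) → ℂ) (K : Set (Fin n → ℂ)) : Prop :=
  (∀ z ∈ K, Measurable fun ω => r ω z) ∧
  (∀ ω : Ω, ∃ p q : MvPolynomial (Fin n) ℂ, (∀ z ∈ K, eval z q ≠ 0) ∧
    ∀ z ∈ K, r ω z = eval z p / eval z q)

open Set TopologicalSpace

section MeasurableReindexing

variable {Ω X E : Type*} [PseudoMetricSpace E]

theorem ContinuousOn.dist_le_of_dense_subset [TopologicalSpace X] {K D : Set X} (hDK : D ⊆ K)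
    (hKD : K ⊆ closure D) {g h : X → E} (hg : ContinuousOn g K) (hh : ContinuousOn h K) {ε : ℝ}
    (hε : ∀ d ∈ D, dist (g d) (h d) ≤ ε) {z : X} (hz : z ∈ K) : dist (g z) (h z) ≤ ε :=
  ContinuousWithinAt.closure_le (hKD hz) (ContinuousWithinAt.mono (.dist (hg z hz) (hh z hz)) hDK)
    continuousWithinAt_const hε

variable [MeasurableSpace Ω] [SecondCountableTopology E] [MeasurableSpace E] [BorelSpace E]

theorem measurableSet_forall_dist_le {D : Set X} (hD : D.Countable) {g h : Ω → X → E}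
    (hg : ∀ z ∈ D, Measurable fun ω => g ω z) (hh : ∀ z ∈ D, Measurable fun ω => h ω z) (ε : ℝ) :
    MeasurableSet {ω | ∀ z ∈ D, dist (g ω z) (h ω z) ≤ ε} := by
  simp only [ofPred_forall]
  exact .biInter hD fun z hz => measurableSet_le ((hg z hz).dist (hh z hz)) measurable_const

theorem exists_measurable_reindex_tendstoUniformlyOn [TopologicalSpace X] [PseudoMetrizableSpace X]
    {K : Set X} (hK : IsSeparable K) {F : ℕ → Ω → X → E} {f : Ω → X → E}
    (hF_meas : ∀ k, ∀ z ∈ K, Measurable fun ω => F k ω z)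
    (hF_cont : ∀ k ω, ContinuousOn (F k ω) K)
    (hF_lim : ∀ ω, TendstoUniformlyOn (fun k => F k ω) (f ω) atTop K) :
    ∃ σ : ℕ → Ω → ℕ, (∀ j, ∀ z ∈ K, Measurable fun ω => F (σ j ω) ω z) ∧
      TendstoUniformlyOn (fun j (p : Ω × X) => F (σ j p.1) p.1 p.2) (Function.uncurry f) atTop
        (univ ×ˢ K) := by
  classical
  obtain ⟨D, hDK, hD, hKD⟩ := hK.exists_countable_dense_subset
  have hf_meas : ∀ z ∈ K, Measurable fun ω => f ω z := fun z hz =>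
    measurable_of_tendsto_metrizable (hF_meas · z hz)
      (tendsto_pi_nhds.2 fun ω => (hF_lim ω).tendsto_at hz)
  have hf_cont : ∀ ω, ContinuousOn (f ω) K := fun ω =>
    (hF_lim ω).continuousOn (Frequently.of_forall (hF_cont · ω))
  have hex : ∀ (j : ℕ) ω, ∃ k, ∀ z ∈ D, dist (F k ω z) (f ω z) ≤ 1 / ((j : ℝ) + 1) := by
    intro j ω
    obtain ⟨k, hk⟩ := (Metric.tendstoUniformlyOn_iff.1 (hF_lim ω) _ Nat.one_div_pos_of_nat).exists
    exact ⟨k, fun z hz => by rw [dist_comm]; exact (hk z (hDK hz)).le⟩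
  refine ⟨fun j ω => Nat.find (hex j ω), fun j z hz => ?_, ?_⟩
  · exact Measurable.find (fun k => hF_meas k z hz)
      (fun k => measurableSet_forall_dist_le hD (fun d hd => hF_meas k d (hDK hd))
        (fun d hd => hf_meas d (hDK hd)) _) (hex j)
  · rw [Metric.tendstoUniformlyOn_iff]
    intro δ hδ
    filter_upwards [tendsto_one_div_add_atTop_nhds_zero_nat.eventually (gt_mem_nhds hδ)] with j hj
    rintro ⟨ω, z⟩ ⟨-, hz⟩
    rw [dist_comm]
    exact (ContinuousOn.dist_le_of_dense_subset hDK hKD (hF_cont _ ω) (hf_cont ω)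
      (Nat.find_spec (hex j ω)) hz).trans_lt hj

end MeasurableReindexing

theorem IsRandomRationalOn.continuousOn {Ω : Type*} [MeasurableSpace Ω] {n : ℕ}
    {r : Ω → (Fin n → ℂ) → ℂ} {K : Set (Fin n → ℂ)} (hr : IsRandomRationalOn r K) (ω : Ω) :
    ContinuousOn (r ω) K := by
  obtain ⟨p, q, hq, hpq⟩ := hr.2 ω
  exact ((continuous_eval p).continuousOn.div (continuous_eval q).continuousOn hq).congr hpq

theorem pointwise_uniform_iff_jointly_uniform_rational_general
    {Ω : Type*} [MeasurableSpace Ω] {n : ℕ}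
    {K : Set (Fin n → ℂ)}
    (f : Ω → (Fin n → ℂ) → ℂ) :
    (∃ r : ℕ → Ω → (Fin n → ℂ) → ℂ,
      (∀ j : ℕ, IsRandomRationalOn (r j) K) ∧
      (∀ ω : Ω, TendstoUniformlyOn (fun j => r j ω) (f ω) atTop K)) ↔
    (∃ r : ℕ → Ω → (Fin n → ℂ) → ℂ,
      (∀ j : ℕ, IsRandomRationalOn (r j) K) ∧
      (∀ ε > (0 : ℝ), ∃ N : ℕ, ∀ j ≥ N, ∀ ω : Ω, ∀ z ∈ K, ‖r j ω z - f ω z‖ < ε)) := by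
  constructor
  · rintro ⟨r, hr, hlim⟩
    obtain ⟨σ, hσ_meas, hσ_lim⟩ := exists_measurable_reindex_tendstoUniformlyOn
      (IsSeparable.of_separableSpace K) (fun k => (hr k).1) (fun k => (hr k).continuousOn) hlim
    refine ⟨fun j ω => r (σ j ω) ω, fun j => ⟨hσ_meas j, fun ω => (hr (σ j ω)).2 ω⟩, ?_⟩
    intro ε hε
    obtain ⟨N, hN⟩ := eventually_atTop.1 (Metric.tendstoUniformlyOn_iff.1 hσ_lim ε hε)
    exact ⟨N, fun j hj ω z hz => by simpa [dist_eq_norm'] using hN j hj (ω, z) ⟨trivial, hz⟩⟩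
  · rintro ⟨r, hr, hlim⟩
    refine ⟨r, hr, fun ω => Metric.tendstoUniformlyOn_iff.2 fun ε hε => ?_⟩
    obtain ⟨N, hN⟩ := hlim ε hε
    exact eventually_atTop.2 ⟨N, fun j hj z hz => by simpa [dist_eq_norm'] using hN j hj ω z hz⟩

/-- Corollary `surprise` of the paper. Let `K ⊆ ℂⁿ` be a nonempty
compact set, `(Ω, 𝒜)` a measurable space and `f : Ω × K → ℂ` a mapping. There is a
sequence of random rational functions pole-free on `K` converging to `f(ω, ·)` uniformly
on `K` for each `ω` if and only if there is such a sequence converging to `f` uniformly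
on `Ω × K`. -/
theorem pointwise_uniform_iff_jointly_uniform_rational
    {Ω : Type*} [MeasurableSpace Ω] {n : ℕ}
    {K : Set (Fin n → ℂ)} (hK : IsCompact K) (hKne : K.Nonempty)
    (f : Ω → (Fin n → ℂ) → ℂ) :
    (∃ r : ℕ → Ω → (Fin n → ℂ) → ℂ,
      (∀ j : ℕ, IsRandomRationalOn (r j) K) ∧
      (∀ ω : Ω, TendstoUniformlyOn (fun j => r j ω) (f ω) atTop K)) ↔
    (∃ r : ℕ → Ω → (Fin n → ℂ) → ℂ,
      (∀ j : ℕ, IsRandomRationalOn (r j) K) ∧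
      (∀ ε > (0 : ℝ), ∃ N : ℕ, ∀ j ≥ N, ∀ ω : Ω, ∀ z ∈ K, ‖r j ω z - f ω z‖ < ε)) :=
  pointwise_uniform_iff_jointly_uniform_rational_general f
end
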